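/- arXiv:2003.04834 — 5 statements merged into one kernel-verified Lean document; each statement's English description precedes it below -/
import Mathlib

section
/- Let f be either f_com or f_0. The dimension of the ℂ-linear span of the tensors A^{(i)}_{e,e'} f, ranging over all i ∈ Fin d and all pairs of distinct edges e = (a,b), e' = (a',b') ∈ E^i that share exactly one vertex (i.e. exactly one of a = a' and b = b' holds), equals Σ_{i ∈ Fin d} (w (i−1) + w (i+1) − 1) · (w i − 1) · w i, where indices of w are taken modulo d. -/
open scoped BigOperators

attribute [local instance] Classical.propDecidable

namespace ABP

variable {d : ℕ} [NeZero d]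

/-- The set of edges in layer `i` of a (cyclic / trace) ABP of width format `w`:
an edge `(a, b)` goes from vertex `a` of layer `i` to vertex `b` of layer `i + 1`
(layer indices modulo `d`). -/
abbrev Edge (w : Fin d → ℕ) (i : Fin d) : Type := Fin (w i) × Fin (w (i + 1))

/-- An edge tuple is a valid path if consecutive edges match (cyclically). -/
def ValidPath (w : Fin d → ℕ) (p : ∀ i : Fin d, Edge w i) : Prop :=
  ∀ i : Fin d, (p i).2 = (p (i + 1)).1

/-- An edge is parity preserving if its two endpoints have the same parity. -/
def ParityPres {w : Fin d → ℕ} {i : Fin d} (e : Edge w i) : Prop :=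
  e.1.val % 2 = e.2.val % 2

/-- The number of parity-preserving edges of an edge tuple. -/
noncomputable def ppCount (w : Fin d → ℕ) (p : ∀ i : Fin d, Edge w i) : ℕ :=
  (Finset.univ.filter fun i : Fin d => ParityPres (p i)).card

/-- The tensor `f_com`: value 1 on valid paths, 0 elsewhere. -/
noncomputable def fcom (w : Fin d → ℕ) : (∀ i : Fin d, Edge w i) → ℂ :=
  fun p => if ValidPath w p then 1 else 0

/-- The tensor `f_0`: value 1 on valid paths containing exactly one
parity-preserving edge, 0 elsewhere. -/
noncomputable def f0 (w : Fin d → ℕ) : (∀ i : Fin d, Edge w i) → ℂ :=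
  fun p => if ValidPath w p ∧ ppCount w p = 1 then 1 else 0

/-- The action of a tuple of matrices `g i : E^i → E^i → ℂ` on a tensor:
`((⊗ᵢ gᵢ) f)(p) = Σ_q (Πᵢ gᵢ (p i) (q i)) · f q`. -/
noncomputable def actT (w : Fin d → ℕ) (g : ∀ i : Fin d, Edge w i → Edge w i → ℂ)
    (f : (∀ i : Fin d, Edge w i) → ℂ) : (∀ i : Fin d, Edge w i) → ℂ :=
  fun p => ∑ q : ∀ i : Fin d, Edge w i, (∏ i : Fin d, g i (p i) (q i)) * f q

end ABP

namespace ABP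

/-- The action on the `i`-th tensor factor of the elementary matrix with a single 1
in position `(e, e')`:
`(A^{(i)}_{e,e'} f)(p) = f(p with i-th entry replaced by e)` if `p i = e'`, else `0`. -/
noncomputable def Aact {d : ℕ} [NeZero d] (w : Fin d → ℕ) (i : Fin d) (e e' : Edge w i)
    (f : (∀ i : Fin d, Edge w i) → ℂ) : (∀ i : Fin d, Edge w i) → ℂ :=
  fun p => if p i = e' then f (Function.update p i e) else 0

end ABP

namespace ABP

/-- Index type: a layer `i` together with a pair of distinct edges of layer `i`
sharing exactly one vertex (exactly one of the two coordinate equalities holds). -/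
def OneShare {d : ℕ} [NeZero d] (w : Fin d → ℕ) : Type :=
  Σ i : Fin d, {ee : Edge w i × Edge w i // Xor' (ee.1.1 = ee.2.1) (ee.1.2 = ee.2.2)}

end ABP

namespace G1X
open ABP Finset

variable {d : ℕ} [NeZero d]

theorem fin_add_one_ne (hd : 3 ≤ d) (i : Fin d) : i + 1 ≠ i := by
  intro h
  have h2 := congrArg Fin.val h
  simp only [Fin.add_def, Fin.val_one'] at h2
  have h3 : 1 % d = 1 := Nat.mod_eq_of_lt (by omega)
  rw [h3] at h2
  have h4 := i.isLt
  rcases Nat.lt_or_ge (i.val + 1) d with h' | h'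
  · rw [Nat.mod_eq_of_lt h'] at h2; exact absurd h2 (by omega)
  · have h5 : i.val + 1 = d := by omega
    rw [h5, Nat.mod_self] at h2
    omega

theorem fin_add_two_ne (hd : 3 ≤ d) (i : Fin d) : i + 1 + 1 ≠ i := by
  intro h
  have h2 := congrArg Fin.val h
  simp only [Fin.add_def, Fin.val_one'] at h2
  have h3 : 1 % d = 1 := Nat.mod_eq_of_lt (by omega)
  rw [h3] at h2
  have h4 := i.isLt
  rcases Nat.lt_or_ge (i.val + 1) d with h' | h'
  · rw [Nat.mod_eq_of_lt h'] at h2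
    rcases Nat.lt_or_ge (i.val + 1 + 1) d with h'' | h''
    · rw [Nat.mod_eq_of_lt h''] at h2; exact absurd h2 (by omega)
    · have h5 : i.val + 1 + 1 = d := by omega
      rw [h5, Nat.mod_self] at h2; omega
  · have h5 : i.val + 1 = d := by omega
    rw [h5, Nat.mod_self, h3] at h2
    omega

theorem fin_sub_add (j : Fin d) : (j - 1) + 1 = j := sub_add_cancel j 1

variable (w : Fin d → ℕ)

/-- common form of `fcom` / `f0`. -/
def Qb (b : Bool) (n : ℕ) : Prop := b = true → n = 1

noncomputable def fGen (b : Bool) : (∀ i : Fin d, Edge w i) → ℂ :=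
  fun p => if ValidPath w p ∧ Qb b (ppCount w p) then 1 else 0

theorem fcom_eq : fcom w = fGen w false := by
  funext p; simp [fcom, fGen, Qb]

theorem f0_eq : f0 w = fGen w true := by
  funext p; simp [f0, fGen, Qb]

noncomputable instance : Fintype (OneShare w) := by
  delta OneShare; infer_instance

noncomputable def Phi (f : (∀ i : Fin d, Edge w i) → ℂ) :
    (OneShare w → ℂ) →ₗ[ℂ] ((∀ i : Fin d, Edge w i) → ℂ) where
  toFun c := ∑ x : OneShare w, c x • Aact w x.1 x.2.val.1 x.2.val.2 f
  map_add' c₁ c₂ := by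
    simp only [Pi.add_apply, add_smul, Finset.sum_add_distrib]
  map_smul' a c := by
    simp only [Pi.smul_apply, RingHom.id_apply, smul_eq_mul, ← smul_smul, ← Finset.smul_sum]

theorem span_eq_range (f : (∀ i : Fin d, Edge w i) → ℂ) :
    Submodule.span ℂ
      (Set.range fun x : OneShare w => Aact w x.1 x.2.val.1 x.2.val.2 f) =
    LinearMap.range (Phi w f) := by
  apply le_antisymm
  · rw [Submodule.span_le]
    rintro _ ⟨x, rfl⟩
    refine ⟨Pi.single x 1, ?_⟩
    simp only [Phi, LinearMap.coe_mk, AddHom.coe_mk]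
    rw [Finset.sum_eq_single x]
    · simp
    · intro y _ hy; simp [Pi.single_eq_of_ne hy]
    · intro hx; exact absurd (Finset.mem_univ x) hx
  · rintro _ ⟨c, rfl⟩
    simp only [Phi, LinearMap.coe_mk, AddHom.coe_mk]
    exact Submodule.sum_mem _ fun x _ =>
      Submodule.smul_mem _ _ (Submodule.subset_span ⟨x, rfl⟩)

end G1X

namespace G1X
open ABP Finset

variable {d : ℕ} [NeZero d] (w : Fin d → ℕ)

/-- Parameter space for the kernel: index `i` stands for the junction between
layers `i` and `i+1`; stored is a pair of distinct vertices of layer `i+1`. -/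
abbrev PIdx : Type := Σ i : Fin d, {v : Fin (w (i + 1)) × Fin (w (i + 1)) // v.1 ≠ v.2}

noncomputable def Ufac (b : Bool) (X2 B x1 : ℕ) : ℂ :=
  if b = true ∧ ¬(X2 % 2 = B % 2) ∧ ¬(x1 % 2 = B % 2) then 0 else 1

noncomputable def Vfac (b : Bool) (X2 B y2 : ℕ) : ℂ :=
  if b = true ∧ ¬(X2 % 2 = B % 2) ∧ (y2 % 2 = B % 2) then 0 else 1

def idxF (i : Fin d) (X2 B : Fin (w (i + 1))) (h : X2 ≠ B) (x1 : Fin (w i)) :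
    OneShare w :=
  ⟨i, ⟨((x1, B), (x1, X2)), Or.inl ⟨rfl, fun hc => h hc.symm⟩⟩⟩

def idxS (i : Fin d) (X2 B : Fin (w (i + 1))) (h : X2 ≠ B) (y2 : Fin (w (i + 1 + 1))) :
    OneShare w :=
  ⟨i + 1, ⟨((X2, y2), (B, y2)), Or.inr ⟨rfl, h⟩⟩⟩

noncomputable def relElt (b : Bool) (i : Fin d) (X2 B : Fin (w (i + 1))) (h : X2 ≠ B) :
    OneShare w → ℂ :=
  (∑ x1 : Fin (w i), Ufac b X2.val B.val x1.val • (Pi.single (idxF w i X2 B h x1) (1 : ℂ) : OneShare w → ℂ))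
  - ∑ y2 : Fin (w (i + 1 + 1)), Vfac b X2.val B.val y2.val • (Pi.single (idxS w i X2 B h y2) (1 : ℂ) : OneShare w → ℂ)

noncomputable def Psi (b : Bool) : (PIdx w → ℂ) →ₗ[ℂ] (OneShare w → ℂ) where
  toFun t := ∑ i : Fin d, ∑ s : {v : Fin (w (i + 1)) × Fin (w (i + 1)) // v.1 ≠ v.2},
    t ⟨i, s⟩ • relElt w b i s.val.1 s.val.2 s.prop
  map_add' t₁ t₂ := by
    simp only [Pi.add_apply, add_smul, Finset.sum_add_distrib]
  map_smul' a t := by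
    simp only [Pi.smul_apply, RingHom.id_apply, smul_eq_mul, ← smul_smul, ← Finset.smul_sum]

def parityVertex (hw : ∀ i, 2 ≤ w i) (i : Fin d) (n : ℕ) : Fin (w i) :=
  ⟨n % 2, by have h1 := hw i; have h2 : n % 2 < 2 := Nat.mod_lt _ (by omega); omega⟩

end G1X

namespace G1X
open ABP Finset

variable {d : ℕ} [NeZero d] (w : Fin d → ℕ)

theorem valid_update_i (hd : 3 ≤ d) (p : ∀ j : Fin d, Edge w j) (i : Fin d)
    (bb : Fin (w (i + 1))) :
    ValidPath w (Function.update p i ((p i).1, bb)) ↔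
      ((∀ j, j ≠ i → (p j).2 = (p (j + 1)).1) ∧ bb = (p (i + 1)).1) := by
  set q := Function.update p i ((p i).1, bb) with hq
  have hqi : q i = ((p i).1, bb) := Function.update_self _ _ _
  have hqo : ∀ j, j ≠ i → q j = p j := fun j hj => Function.update_of_ne hj _ _
  have h1i : i + 1 ≠ i := fin_add_one_ne hd i
  constructor
  · intro hv
    constructor
    · intro j hj
      by_cases hji : j + 1 = i
      · subst hji
        have := hv j
        rw [hqo j hj, hqi] at this
        rw [this]
      · have := hv j
        rw [hqo j hj, hqo _ hji] at this
        exact this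
    · have := hv i
      rw [hqi, hqo _ h1i] at this
      exact this
  · rintro ⟨h1, h2⟩ j
    by_cases hji : j = i
    · subst hji
      rw [hqi, hqo _ h1i]
      exact h2
    · by_cases hji1 : j + 1 = i
      · subst hji1
        rw [hqo j hji, hqi]
        exact h1 j hji
      · rw [hqo j hji, hqo _ hji1]
        exact h1 j hji

theorem valid_update_i1 (hd : 3 ≤ d) (p : ∀ j : Fin d, Edge w j) (i : Fin d)
    (aa : Fin (w (i + 1))) :
    ValidPath w (Function.update p (i + 1) (aa, (p (i + 1)).2)) ↔
      ((∀ j, j ≠ i → (p j).2 = (p (j + 1)).1) ∧ (p i).2 = aa) := by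
  set q := Function.update p (i + 1) (aa, (p (i + 1)).2) with hq
  have hqi : q (i + 1) = (aa, (p (i + 1)).2) := Function.update_self _ _ _
  have hqo : ∀ j, j ≠ i + 1 → q j = p j := fun j hj => Function.update_of_ne hj _ _
  have h1i : i ≠ i + 1 := fun h => fin_add_one_ne hd i h.symm
  have h2i : i + 1 + 1 ≠ i + 1 := fin_add_one_ne hd (i + 1)
  constructor
  · intro hv
    constructor
    · intro j hj
      by_cases hji : j = i + 1
      · subst hji
        have := hv (i + 1)
        rw [hqi, hqo _ h2i] at this
        exact this
      · have hj1 : j + 1 ≠ i + 1 := fun hc => hj (add_right_cancel hc)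
        have := hv j
        rw [hqo j hji, hqo _ hj1] at this
        exact this
    · have := hv i
      rw [hqo i h1i, hqi] at this
      exact this
  · rintro ⟨h1, h2⟩ j
    by_cases hji : j = i
    · subst hji
      rw [hqo j h1i, hqi]
      exact h2
    · by_cases hji1 : j = i + 1
      · subst hji1
        rw [hqi, hqo _ h2i]
        exact h1 (i + 1) (fun hc => h1i hc.symm)
      · have hj1 : j + 1 ≠ i + 1 := fun hc => hji (add_right_cancel hc)
        rw [hqo j hji1, hqo _ hj1]
        exact h1 j hji

theorem ppCount_split (hd : 3 ≤ d) (i : Fin d) (q : ∀ j : Fin d, Edge w j) :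
    ppCount w q = (((univ : Finset (Fin d)) \ {i, i + 1}).filter fun j => ParityPres (q j)).card
      + ((if ParityPres (q i) then 1 else 0) + (if ParityPres (q (i + 1)) then 1 else 0)) := by
  classical
  have hne : i ≠ i + 1 := fun h => fin_add_one_ne hd i h.symm
  have hdisj : Disjoint (((univ : Finset (Fin d)) \ {i, i + 1}).filter fun j => ParityPres (q j))
      (({i, i + 1} : Finset (Fin d)).filter fun j => ParityPres (q j)) :=
    Finset.disjoint_filter_filter Finset.sdiff_disjoint
  have hmain : ppCount w q = (((univ : Finset (Fin d)) \ {i, i + 1}).filter fun j => ParityPres (q j)).card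
      + (({i, i + 1} : Finset (Fin d)).filter fun j => ParityPres (q j)).card := by
    rw [← Finset.card_union_of_disjoint hdisj, ← Finset.filter_union,
      Finset.sdiff_union_of_subset (Finset.subset_univ _), ppCount]
  rw [hmain]
  congr 1
  have hins : ({i, i + 1} : Finset (Fin d)) = insert i {i + 1} := rfl
  rw [hins, Finset.filter_insert, Finset.filter_singleton]
  by_cases h1 : ParityPres (q i) <;> by_cases h2 : ParityPres (q (i + 1)) <;>
    simp [h1, h2, hne]

theorem key_ineq (b : Bool) (M xv bv av gv : ℕ) :
    Ufac b xv bv av *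
      (if Qb b (M + ((if av % 2 = bv % 2 then 1 else 0) + (if bv % 2 = gv % 2 then 1 else 0))) then (1:ℂ) else 0)
  = Vfac b xv bv gv *
      (if Qb b (M + ((if av % 2 = xv % 2 then 1 else 0) + (if xv % 2 = gv % 2 then 1 else 0))) then (1:ℂ) else 0) := by
  classical
  rw [Ufac, Vfac]
  have hQ : ∀ n : ℕ, (if Qb b n then (1:ℂ) else 0) = if (b = true → n = 1) then 1 else 0 :=
    fun n => if_congr (by rw [Qb]) rfl rfl
  rw [hQ, hQ]
  cases b with
  | false => simp
  | true =>
    by_cases hxb : xv % 2 = bv % 2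
    · rw [← hxb]
      simp
    · by_cases hab : av % 2 = bv % 2 <;> by_cases hgb : gv % 2 = bv % 2
      · rw [if_pos (⟨rfl, hxb, hgb⟩ : true = true ∧ ¬(xv % 2 = bv % 2) ∧ gv % 2 = bv % 2),
          zero_mul, if_pos hab, if_pos (show bv % 2 = gv % 2 by omega),
          if_neg (show ¬(true = true → M + (1 + 1) = 1) from fun hc => by have := hc rfl; omega), mul_zero]
      · rw [if_neg (show ¬(true = true ∧ ¬(xv % 2 = bv % 2) ∧ ¬(av % 2 = bv % 2)) by
            rintro ⟨-, -, hc⟩; exact hc hab),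
          if_neg (show ¬(true = true ∧ ¬(xv % 2 = bv % 2) ∧ gv % 2 = bv % 2) by
            rintro ⟨-, -, hc⟩; exact hgb hc),
          if_pos hab, if_neg (show ¬(bv % 2 = gv % 2) by omega),
          if_neg (show ¬(av % 2 = xv % 2) by omega), if_pos (show xv % 2 = gv % 2 by omega)]
      · rw [if_pos (⟨rfl, hxb, hab⟩ : true = true ∧ ¬(xv % 2 = bv % 2) ∧ ¬(av % 2 = bv % 2)),
          zero_mul,
          if_pos (⟨rfl, hxb, hgb⟩ : true = true ∧ ¬(xv % 2 = bv % 2) ∧ gv % 2 = bv % 2),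
          zero_mul]
      · rw [if_pos (⟨rfl, hxb, hab⟩ : true = true ∧ ¬(xv % 2 = bv % 2) ∧ ¬(av % 2 = bv % 2)),
          zero_mul,
          if_neg (show ¬(true = true ∧ ¬(xv % 2 = bv % 2) ∧ gv % 2 = bv % 2) by
            rintro ⟨-, -, hc⟩; exact hgb hc),
          if_pos (show av % 2 = xv % 2 by omega), if_pos (show xv % 2 = gv % 2 by omega),
          if_neg (show ¬(true = true → M + (1 + 1) = 1) from fun hc => by have := hc rfl; omega), mul_zero]

end G1X

namespace G1X
open ABP Finset

variable {d : ℕ} [NeZero d] (w : Fin d → ℕ)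

theorem phi_single (f : (∀ j : Fin d, Edge w j) → ℂ) (x : OneShare w) :
    Phi w f (Pi.single x (1:ℂ)) = Aact w x.1 x.2.val.1 x.2.val.2 f := by
  classical
  simp only [Phi, LinearMap.coe_mk, AddHom.coe_mk]
  rw [Finset.sum_eq_single x]
  · simp
  · intro y _ hy; simp [Pi.single_eq_of_ne hy]
  · intro hx; exact absurd (Finset.mem_univ x) hx

theorem core1_pointwise (hd : 3 ≤ d) (b : Bool) (i : Fin d)
    (X2 B : Fin (w (i + 1))) (h : X2 ≠ B) (p : ∀ j : Fin d, Edge w j) :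
    (if (p i).2 = X2 then
        Ufac b X2.val B.val (p i).1.val * fGen w b (Function.update p i ((p i).1, B)) else 0)
  = (if (p (i + 1)).1 = B then
        Vfac b X2.val B.val (p (i + 1)).2.val
          * fGen w b (Function.update p (i + 1) (X2, (p (i + 1)).2)) else 0) := by
  classical
  set q1 := Function.update p i ((p i).1, B) with hq1
  set q2 := Function.update p (i + 1) (X2, (p (i + 1)).2) with hq2
  have hv1 := valid_update_i w hd p i B
  have hv2 := valid_update_i1 w hd p i X2
  by_cases hX : (p i).2 = X2
  · by_cases hB : (p (i + 1)).1 = B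
    · rw [if_pos hX, if_pos hB]
      by_cases hJ : ∀ j, j ≠ i → (p j).2 = (p (j + 1)).1
      · -- both updates valid
        have hval1 : ValidPath w q1 := hv1.mpr ⟨hJ, hB.symm⟩
        have hval2 : ValidPath w q2 := hv2.mpr ⟨hJ, hX⟩
        have hf1 : fGen w b q1 = if Qb b (ppCount w q1) then 1 else 0 := by
          rw [fGen]
          by_cases hQ : Qb b (ppCount w q1)
          · rw [if_pos ⟨hval1, hQ⟩, if_pos hQ]
          · rw [if_neg (fun hc => hQ hc.2), if_neg hQ]
        have hf2 : fGen w b q2 = if Qb b (ppCount w q2) then 1 else 0 := by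
          rw [fGen]
          by_cases hQ : Qb b (ppCount w q2)
          · rw [if_pos ⟨hval2, hQ⟩, if_pos hQ]
          · rw [if_neg (fun hc => hQ hc.2), if_neg hQ]
        rw [hf1, hf2]
        -- ppCount computations
        have hM : (((univ : Finset (Fin d)) \ {i, i + 1}).filter fun j => ParityPres (q1 j))
            = (((univ : Finset (Fin d)) \ {i, i + 1}).filter fun j => ParityPres (q2 j)) := by
          apply Finset.filter_congr
          intro j hj
          simp only [Finset.mem_sdiff, Finset.mem_insert, Finset.mem_singleton] at hj
          have hji : j ≠ i := fun hc => hj.2 (Or.inl hc)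
          have hji1 : j ≠ i + 1 := fun hc => hj.2 (Or.inr hc)
          rw [hq1, hq2, Function.update_of_ne hji, Function.update_of_ne hji1]
        set M := (((univ : Finset (Fin d)) \ {i, i + 1}).filter fun j => ParityPres (q1 j)).card
          with hMdef
        have hpp1 : ppCount w q1 = M
            + ((if (p i).1.val % 2 = B.val % 2 then 1 else 0)
              + (if B.val % 2 = (p (i + 1)).2.val % 2 then 1 else 0)) := by
          rw [ppCount_split w hd i q1, ← hMdef]
          congr 2
          · refine if_congr ?_ rfl rfl
            rw [show q1 i = ((p i).1, B) from Function.update_self _ _ _]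
            exact Iff.rfl
          · refine if_congr ?_ rfl rfl
            rw [show q1 (i + 1) = p (i + 1) from Function.update_of_ne (fin_add_one_ne hd i) _ _]
            show (p (i + 1)).1.val % 2 = (p (i + 1)).2.val % 2 ↔ _
            rw [hB]
        have hpp2 : ppCount w q2 = M
            + ((if (p i).1.val % 2 = X2.val % 2 then 1 else 0)
              + (if X2.val % 2 = (p (i + 1)).2.val % 2 then 1 else 0)) := by
          rw [ppCount_split w hd i q2, ← hM, ← hMdef]
          congr 2
          · refine if_congr ?_ rfl rfl
            rw [show q2 i = p i from
              Function.update_of_ne (fun hc => fin_add_one_ne hd i hc.symm) _ _]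
            show (p i).1.val % 2 = (p i).2.val % 2 ↔ _
            rw [hX]
          · refine if_congr ?_ rfl rfl
            rw [show q2 (i + 1) = (X2, (p (i + 1)).2) from Function.update_self _ _ _]
            exact Iff.rfl
        rw [hpp1, hpp2]
        exact key_ineq b M X2.val B.val (p i).1.val (p (i + 1)).2.val
      · -- neither update valid
        have hnv1 : ¬ ValidPath w q1 := fun hc => hJ (hv1.mp hc).1
        have hnv2 : ¬ ValidPath w q2 := fun hc => hJ (hv2.mp hc).1
        rw [fGen, if_neg (fun hc => hnv1 hc.1), fGen, if_neg (fun hc => hnv2 hc.1),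
          mul_zero, mul_zero]
    · rw [if_neg hB]
      rw [if_pos hX]
      have hnv1 : ¬ ValidPath w q1 := fun hc => hB ((hv1.mp hc).2.symm)
      rw [fGen, if_neg (fun hc => hnv1 hc.1), mul_zero]
  · rw [if_neg hX]
    by_cases hB : (p (i + 1)).1 = B
    · rw [if_pos hB]
      have hnv2 : ¬ ValidPath w q2 := fun hc => hX (hv2.mp hc).2
      rw [fGen, if_neg (fun hc => hnv2 hc.1), mul_zero]
    · rw [if_neg hB]

theorem phi_relElt (hd : 3 ≤ d) (b : Bool) (i : Fin d) (X2 B : Fin (w (i + 1))) (h : X2 ≠ B) :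
    Phi w (fGen w b) (relElt w b i X2 B h) = 0 := by
  classical
  rw [relElt, map_sub, map_sum, map_sum, sub_eq_zero]
  simp only [map_smul, phi_single]
  funext p
  rw [Finset.sum_apply, Finset.sum_apply]
  have hL : (∑ x1 : Fin (w i),
      (Ufac b X2.val B.val x1.val •
        Aact w (idxF w i X2 B h x1).1 (idxF w i X2 B h x1).2.val.1
          (idxF w i X2 B h x1).2.val.2 (fGen w b)) p)
      = if (p i).2 = X2 then
          Ufac b X2.val B.val (p i).1.val * fGen w b (Function.update p i ((p i).1, B)) else 0 := by
    rw [Finset.sum_eq_single (p i).1]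
    · simp only [idxF, Aact, Pi.smul_apply, smul_eq_mul]
      by_cases hX : (p i).2 = X2
      · rw [if_pos hX, if_pos (show p i = ((p i).1, X2) from Prod.ext rfl hX)]
      · rw [if_neg hX, if_neg (fun hc : p i = ((p i).1, X2) => hX (congrArg Prod.snd hc)), mul_zero]
    · intro x1 _ hx1
      simp only [idxF, Aact, Pi.smul_apply, smul_eq_mul]
      rw [if_neg (fun hc : p i = (x1, X2) => hx1 (congrArg Prod.fst hc).symm), mul_zero]
    · intro hc; exact absurd (Finset.mem_univ _) hc
  have hR : (∑ y2 : Fin (w (i + 1 + 1)),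
      (Vfac b X2.val B.val y2.val •
        Aact w (idxS w i X2 B h y2).1 (idxS w i X2 B h y2).2.val.1
          (idxS w i X2 B h y2).2.val.2 (fGen w b)) p)
      = if (p (i + 1)).1 = B then
          Vfac b X2.val B.val (p (i + 1)).2.val
            * fGen w b (Function.update p (i + 1) (X2, (p (i + 1)).2)) else 0 := by
    rw [Finset.sum_eq_single (p (i + 1)).2]
    · simp only [idxS, Aact, Pi.smul_apply, smul_eq_mul]
      by_cases hB : (p (i + 1)).1 = B
      · rw [if_pos hB, if_pos (show p (i + 1) = (B, (p (i + 1)).2) from Prod.ext hB rfl)]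
      · rw [if_neg hB,
          if_neg (fun hc : p (i + 1) = (B, (p (i + 1)).2) => hB (congrArg Prod.fst hc)), mul_zero]
    · intro y2 _ hy2
      simp only [idxS, Aact, Pi.smul_apply, smul_eq_mul]
      rw [if_neg (fun hc : p (i + 1) = (B, y2) => hy2 (congrArg Prod.snd hc).symm), mul_zero]
    · intro hc; exact absurd (Finset.mem_univ _) hc
  rw [hL, hR]
  exact core1_pointwise w hd b i X2 B h p

end G1X

namespace G1X
open ABP Finset

variable {d : ℕ} [NeZero d] (w : Fin d → ℕ)

theorem sum_eval (hd : 3 ≤ d) (f : (∀ j : Fin d, Edge w j) → ℂ)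
    (hfv : ∀ q, ¬ ValidPath w q → f q = 0)
    (c : OneShare w → ℂ) (i : Fin d) (p : ∀ j : Fin d, Edge w j)
    (hval : ∀ j, j ≠ i → (p j).2 = (p (j + 1)).1)
    (hfail : (p i).2 ≠ (p (i + 1)).1) :
    Phi w f c p =
      c (idxF w i (p i).2 (p (i + 1)).1 hfail (p i).1)
          * f (Function.update p i ((p i).1, (p (i + 1)).1))
      + c (idxS w i (p i).2 (p (i + 1)).1 hfail (p (i + 1)).2)
          * f (Function.update p (i + 1) ((p i).2, (p (i + 1)).2)) := by
  classical
  set x₁ := idxF w i (p i).2 (p (i + 1)).1 hfail (p i).1 with hx₁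
  set x₂ := idxS w i (p i).2 (p (i + 1)).1 hfail (p (i + 1)).2 with hx₂
  have hne12 : x₁ ≠ x₂ := by
    intro hc
    have := congrArg Sigma.fst hc
    simp only [hx₁, hx₂, idxF, idxS] at this
    exact fin_add_one_ne hd i this.symm
  have hPhi : Phi w f c p = ∑ x : OneShare w,
      c x * (if p x.1 = x.2.val.2 then f (Function.update p x.1 x.2.val.1) else 0) := by
    simp only [Phi, LinearMap.coe_mk, AddHom.coe_mk, Finset.sum_apply, Pi.smul_apply,
      smul_eq_mul, Aact]
  rw [hPhi]
  have hvanish : ∀ x ∈ (univ : Finset (OneShare w)), x ∉ ({x₁, x₂} : Finset (OneShare w)) →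
      c x * (if p x.1 = x.2.val.2 then f (Function.update p x.1 x.2.val.1) else 0) = 0 := by
    intro x _ hx
    simp only [Finset.mem_insert, Finset.mem_singleton] at hx
    push_neg at hx
    obtain ⟨hx1, hx2⟩ := hx
    obtain ⟨j, ⟨⟨e, e'⟩, hxor⟩⟩ := x
    by_cases hpj : p j = e'
    · rw [if_pos hpj]
      by_cases hfq : f (Function.update p j e) = 0
      · rw [hfq, mul_zero]
      · exfalso
        have hq : ValidPath w (Function.update p j e) := by
          by_contra hcv
          exact hfq (hfv _ hcv)
        set q := Function.update p j e with hqd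
        have hj2 : j = i ∨ j = i + 1 := by
          by_contra hj
          push_neg at hj
          have hqi : q i = p i := Function.update_of_ne (fun hc => hj.1 hc.symm) _ _
          have hqi1 : q (i + 1) = p (i + 1) := Function.update_of_ne (fun hc => hj.2 hc.symm) _ _
          have := hq i
          rw [hqi, hqi1] at this
          exact hfail this
        rcases hj2 with rfl | rfl
        · -- j = i
          obtain ⟨k, rfl⟩ : ∃ k : Fin d, k + 1 = j := ⟨j - 1, fin_sub_add j⟩
          have hkj : k ≠ k + 1 := fun hc => fin_add_one_ne hd k hc.symm
          have hqk : q k = p k := Function.update_of_ne hkj _ _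
          have hqk1 : q (k + 1) = e := Function.update_self _ _ _
          have he1 : (p k).2 = e.1 := by
            have := hq k
            rw [hqk, hqk1] at this
            exact this
          have he1' : e.1 = (p (k + 1)).1 := by
            rw [← he1]
            exact hval k hkj
          have hq2 : q (k + 1 + 1) = p (k + 1 + 1) :=
            Function.update_of_ne (fin_add_one_ne hd (k + 1)) _ _
          have he2 : e.2 = (p (k + 1 + 1)).1 := by
            have := hq (k + 1)
            rw [hqk1, hq2] at this
            exact this
          apply hx1
          have hee : e = ((p (k + 1)).1, (p (k + 1 + 1)).1) := Prod.ext he1' he2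
          subst hee
          rw [hx₁]
          rw [idxF]
          cases hpj
          rfl
        · -- j = i + 1
          have hqi : q i = p i :=
            Function.update_of_ne (fun hc => fin_add_one_ne hd i hc.symm) _ _
          have hqi1 : q (i + 1) = e := Function.update_self _ _ _
          have he1 : (p i).2 = e.1 := by
            have := hq i
            rw [hqi, hqi1] at this
            exact this
          have hq2 : q (i + 1 + 1) = p (i + 1 + 1) :=
            Function.update_of_ne (fin_add_one_ne hd (i + 1)) _ _
          have he2 : e.2 = (p (i + 1 + 1)).1 := by
            have := hq (i + 1)
            rw [hqi1, hq2] at this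
            exact this
          have he2' : e.2 = (p (i + 1)).2 := by
            rw [he2, ← hval (i + 1) (fin_add_one_ne hd i)]
          apply hx2
          have hee : e = ((p i).2, (p (i + 1)).2) := Prod.ext he1.symm he2'
          subst hee
          rw [hx₂]
          rw [idxS]
          cases hpj
          rfl
    · rw [if_neg hpj, mul_zero]
  rw [← Finset.sum_subset (Finset.subset_univ ({x₁, x₂} : Finset (OneShare w))) hvanish]
  rw [Finset.sum_pair hne12]
  congr 1
  · rw [hx₁, idxF]
    rw [if_pos]
    rfl
  · rw [hx₂, idxS]
    rw [if_pos]
    rfl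

end G1X

namespace G1X
open ABP Finset

variable {d : ℕ} [NeZero d] (w : Fin d → ℕ)

theorem val_neg_one (hd : 3 ≤ d) : ((-1 : Fin d)).val = d - 1 := by
  have h0 : (-1 : Fin d) = 0 - 1 := by rw [zero_sub]
  rw [h0, Fin.sub_def]
  simp only [Fin.val_one', Fin.val_zero, Fin.val_mk]
  have e1 : 1 % d = 1 := Nat.mod_eq_of_lt (by omega)
  rw [e1, Nat.add_zero, Nat.mod_eq_of_lt (by omega)]

theorem fin_val_succ (u : Fin d) (h : u.val + 1 < d) : (u + 1).val = u.val + 1 := by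
  have e1 : 1 % d = 1 := Nat.mod_eq_of_lt (by omega)
  simp only [Fin.add_def, Fin.val_one', Fin.val_mk]
  rw [e1, Nat.mod_eq_of_lt h]

theorem char0 (i j : Fin d) : (j - (i + 1)).val = 0 ↔ j = i + 1 := by
  rw [show ((j - (i + 1)).val = 0) ↔ (j - (i+1) = 0) from
      by rw [Fin.ext_iff, Fin.val_zero], sub_eq_zero]

theorem char1 (hd : 3 ≤ d) (i j : Fin d) : (j - (i + 1)).val = 1 ↔ j = i + 1 + 1 := by
  have e1 : 1 % d = 1 := Nat.mod_eq_of_lt (by omega)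
  rw [show ((j - (i + 1)).val = 1) ↔ (j - (i+1) = 1) from
      by rw [Fin.ext_iff, Fin.val_one', e1], sub_eq_iff_eq_add, add_comm (1 : Fin d) (i + 1)]

theorem charI (hd : 3 ≤ d) (i j : Fin d) : (j - (i + 1)).val = d - 1 ↔ j = i := by
  have hneg : i - (i + 1) = -1 := by
    rw [sub_add_eq_sub_sub, sub_self, zero_sub]
  constructor
  · intro h
    have : j - (i + 1) = i - (i + 1) := by
      rw [hneg, Fin.ext_iff, val_neg_one hd, h]
    exact sub_left_inj.mp this
  · intro h
    rw [h, hneg, val_neg_one hd]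

theorem char_succ (i j : Fin d) : (j + 1) - (i + 1) = (j - (i + 1)) + 1 := by
  abel

section Chain

variable (hw : ∀ i, 2 ≤ w i) (i : Fin d) (x1 : Fin (w i))
  (B : Fin (w (i + 1))) (y2 : Fin (w (i + 1 + 1))) (m : ℕ)

noncomputable def chainV : ∀ j : Fin d, Fin (w j) := fun j =>
  if h : j = i then Fin.cast (by rw [h]) x1
  else if h : j = i + 1 then Fin.cast (by rw [h]) B
  else if h : j = i + 1 + 1 then Fin.cast (by rw [h]) y2
  else ⟨(y2.val + (j - (i + 1)).val - 1 + m) % 2,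
    lt_of_lt_of_le (Nat.mod_lt _ (by omega)) (hw j)⟩

theorem chainV_i : chainV w hw i x1 B y2 m i = x1 := by
  rw [chainV, dif_pos rfl]
  exact Fin.ext (Fin.coe_cast _ _)

theorem chainV_i1 (hd : 3 ≤ d) : chainV w hw i x1 B y2 m (i + 1) = B := by
  rw [chainV, dif_neg (fin_add_one_ne hd i), dif_pos rfl]
  exact Fin.ext (Fin.coe_cast _ _)

theorem chainV_i2 (hd : 3 ≤ d) : chainV w hw i x1 B y2 m (i + 1 + 1) = y2 := by
  rw [chainV, dif_neg (fin_add_two_ne hd i), dif_neg (fin_add_one_ne hd (i + 1)), dif_pos rfl]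
  exact Fin.ext (Fin.coe_cast _ _)

theorem chainV_formula (j : Fin d) (hji : j ≠ i) (hji1 : j ≠ i + 1) (hji2 : j ≠ i + 1 + 1) :
    (chainV w hw i x1 B y2 m j).val = (y2.val + (j - (i + 1)).val - 1 + m) % 2 := by
  rw [chainV, dif_neg hji, dif_neg hji1, dif_neg hji2]

theorem edge_parity (hd : 3 ≤ d) (hodd : Odd d) (hm : m ≤ 1)
    (hpar : x1.val % 2 = (y2.val + 1 - m) % 2)
    (j : Fin d) (hji : j ≠ i) (hji1 : j ≠ i + 1) :
    ((chainV w hw i x1 B y2 m j).val % 2 = (chainV w hw i x1 B y2 m (j + 1)).val % 2)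
      ↔ (m = 1 ∧ j = i + 1 + 1) := by
  obtain ⟨r, hr⟩ := hodd
  set V := chainV w hw i x1 B y2 m with hV
  set t := (j - (i + 1)).val with ht
  have htlt : t < d := (j - (i + 1)).isLt
  have ht0 : t ≠ 0 := fun hc => hji1 ((char0 i j).mp hc)
  have htd : t ≠ d - 1 := fun hc => hji ((charI hd i j).mp hc)
  have htsucc : ((j + 1) - (i + 1)).val = t + 1 := by
    rw [char_succ, fin_val_succ _ (by omega)]
  by_cases h1 : t = 1
  · -- j = i + 1 + 1
    have hj : j = i + 1 + 1 := (char1 hd i j).mp h1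
    have hVjv : (V j).val = y2.val := by
      rw [hj, hV, chainV_i2 w hw i x1 B y2 m hd]
    by_cases h2 : t + 1 = d - 1
    · -- j + 1 = i  (d = 3 case)
      have hj1 : j + 1 = i := (charI hd i (j + 1)).mp (by rw [htsucc, h2])
      have hVj1 : (V (j + 1)).val = x1.val := by rw [hV, hj1, chainV_i]
      rw [hVjv, hVj1, hpar]
      constructor
      · intro h; exact ⟨by omega, hj⟩
      · rintro ⟨hm1, -⟩; omega
    · -- j + 1 in formula branch
      have hj1i : j + 1 ≠ i := fun hc => h2 (by rw [← htsucc, (charI hd i (j+1)).mpr hc])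
      have hj1i1 : j + 1 ≠ i + 1 := fun hc => ht0 (by
        have : ((j+1) - (i+1)).val = 0 := (char0 i (j+1)).mpr hc
        omega)
      have hj1i2 : j + 1 ≠ i + 1 + 1 := fun hc => (by
        have : ((j+1) - (i+1)).val = 1 := (char1 hd i (j+1)).mpr hc
        omega : False)
      have hVj1 : (V (j + 1)).val = (y2.val + (t + 1) - 1 + m) % 2 := by
        rw [hV, chainV_formula w hw i x1 B y2 m (j+1) hj1i hj1i1 hj1i2, htsucc]
      rw [hVjv, hVj1]
      constructor
      · intro h; refine ⟨by omega, hj⟩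
      · rintro ⟨hm1, -⟩; omega
  · -- t ≥ 2 : j in formula branch
    have hji2 : j ≠ i + 1 + 1 := fun hc => h1 ((char1 hd i j).mpr hc)
    have hVj : (V j).val = (y2.val + t - 1 + m) % 2 := by
      rw [hV, chainV_formula w hw i x1 B y2 m j hji hji1 hji2]
    have hRHSfalse : ¬ (m = 1 ∧ j = i + 1 + 1) := fun hc => hji2 hc.2
    by_cases h2 : t + 1 = d - 1
    · -- j + 1 = i
      have hj1 : j + 1 = i := (charI hd i (j + 1)).mp (by rw [htsucc, h2])
      have hVj1 : (V (j + 1)).val = x1.val := by rw [hV, hj1, chainV_i]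
      rw [hVj, hVj1, hpar]
      simp only [hRHSfalse, iff_false]
      omega
    · have hj1i : j + 1 ≠ i := fun hc => h2 (by rw [← htsucc, (charI hd i (j+1)).mpr hc])
      have hj1i1 : j + 1 ≠ i + 1 := fun hc => (by
        have : ((j+1) - (i+1)).val = 0 := (char0 i (j+1)).mpr hc
        omega : False)
      have hj1i2 : j + 1 ≠ i + 1 + 1 := fun hc => (by
        have : ((j+1) - (i+1)).val = 1 := (char1 hd i (j+1)).mpr hc
        omega : False)
      have hVj1 : (V (j + 1)).val = (y2.val + (t + 1) - 1 + m) % 2 := by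
        rw [hV, chainV_formula w hw i x1 B y2 m (j+1) hj1i hj1i1 hj1i2, htsucc]
      rw [hVj, hVj1]
      simp only [hRHSfalse, iff_false]
      omega

end Chain

end G1X

namespace G1X
open ABP Finset

variable {d : ℕ} [NeZero d] (w : Fin d → ℕ)

theorem path_exists (hd : 3 ≤ d) (hodd : Odd d) (hw : ∀ i, 2 ≤ w i)
    (i : Fin d) (x1 : Fin (w i)) (X2 B : Fin (w (i + 1))) (y2 : Fin (w (i + 1 + 1)))
    (m : ℕ) (hm : m ≤ 1) (hpar : x1.val % 2 = (y2.val + 1 - m) % 2) :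
    ∃ p : ∀ j : Fin d, Edge w j, p i = (x1, X2) ∧ p (i + 1) = (B, y2) ∧
      (∀ j, j ≠ i → (p j).2 = (p (j + 1)).1) ∧
      ((((univ : Finset (Fin d)) \ {i, i + 1}).filter fun j => ParityPres (p j)).card = m) := by
  classical
  set V := chainV w hw i x1 B y2 m with hV
  set p := Function.update (fun j : Fin d => ((V j, V (j + 1)) : Edge w j)) i (x1, X2) with hp
  have hpi : p i = (x1, X2) := Function.update_self _ _ _
  have hpo : ∀ j, j ≠ i → p j = (V j, V (j + 1)) := fun j hj => Function.update_of_ne hj _ _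
  have hVi : V i = x1 := chainV_i w hw i x1 B y2 m
  have hVi1 : V (i + 1) = B := chainV_i1 w hw i x1 B y2 m hd
  have hVi2 : V (i + 1 + 1) = y2 := chainV_i2 w hw i x1 B y2 m hd
  have hpi1 : p (i + 1) = (B, y2) := by
    rw [hpo (i + 1) (fin_add_one_ne hd i), hVi1, hVi2]
  refine ⟨p, hpi, hpi1, ?_, ?_⟩
  · intro j hj
    rw [hpo j hj]
    by_cases hj1 : j + 1 = i
    · show V (j + 1) = (p (j + 1)).1
      rw [hj1, hpi, hVi]
    · rw [hpo (j + 1) hj1]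
  · have hfe : (((univ : Finset (Fin d)) \ {i, i + 1}).filter fun j => ParityPres (p j))
        = if m = 1 then ({i + 1 + 1} : Finset (Fin d)) else ∅ := by
      ext j
      simp only [Finset.mem_filter, Finset.mem_sdiff, Finset.mem_univ, true_and,
        Finset.mem_insert, Finset.mem_singleton]
      constructor
      · rintro ⟨hnot, hpp⟩
        push_neg at hnot
        have hji : j ≠ i := hnot.1
        have hji1 : j ≠ i + 1 := hnot.2
        rw [hpo j hji] at hpp
        have hpp' : (V j).val % 2 = (V (j + 1)).val % 2 := hpp
        have hchar := (edge_parity w hw i x1 B y2 m hd hodd hm hpar j hji hji1).mp hpp'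
        rw [if_pos hchar.1]
        simp [hchar.2]
      · intro hmem
        by_cases hm1 : m = 1
        · rw [if_pos hm1] at hmem
          simp only [Finset.mem_singleton] at hmem
          subst hmem
          have hji : i + 1 + 1 ≠ i := fin_add_two_ne hd i
          have hji1 : i + 1 + 1 ≠ i + 1 := fin_add_one_ne hd (i + 1)
          refine ⟨fun hc => hc.elim hji hji1, ?_⟩
          rw [hpo _ hji]
          show (V (i + 1 + 1)).val % 2 = (V (i + 1 + 1 + 1)).val % 2
          exact (edge_parity w hw i x1 B y2 m hd hodd hm hpar (i + 1 + 1) hji hji1).mpr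
            ⟨hm1, rfl⟩
        · rw [if_neg hm1] at hmem
          exact absurd hmem (Finset.notMem_empty j)
    rw [hfe]
    by_cases hm1 : m = 1
    · rw [if_pos hm1, Finset.card_singleton, hm1]
    · rw [if_neg hm1, Finset.card_empty]
      omega

end G1X

namespace G1X
open ABP Finset

variable {d : ℕ} [NeZero d] (w : Fin d → ℕ)

theorem fGen_invalid (b : Bool) : ∀ q, ¬ ValidPath w q → fGen w b q = 0 :=
  fun q hq => by rw [fGen, if_neg (fun hc => hq hc.1)]

theorem fGen_valid (b : Bool) (q : ∀ j : Fin d, Edge w j) (hq : ValidPath w q) :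
    fGen w b q = if Qb b (ppCount w q) then 1 else 0 := by
  rw [fGen]
  by_cases hQ : Qb b (ppCount w q)
  · rw [if_pos ⟨hq, hQ⟩, if_pos hQ]
  · rw [if_neg (fun hcc => hQ hcc.2), if_neg hQ]

theorem rel_eq (hd : 3 ≤ d) (hodd : Odd d) (hw : ∀ i, 2 ≤ w i) (b : Bool)
    (c : OneShare w → ℂ) (hc : ∀ p, Phi w (fGen w b) c p = 0)
    (i : Fin d) (X2 B : Fin (w (i + 1))) (hne : X2 ≠ B)
    (x1 : Fin (w i)) (y2 : Fin (w (i + 1 + 1))) (m : ℕ) (hm : m ≤ 1)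
    (hpar : x1.val % 2 = (y2.val + 1 - m) % 2) :
    c (idxF w i X2 B hne x1) *
      (if Qb b (m + ((if x1.val % 2 = B.val % 2 then 1 else 0)
        + (if B.val % 2 = y2.val % 2 then 1 else 0))) then (1:ℂ) else 0)
    + c (idxS w i X2 B hne y2) *
      (if Qb b (m + ((if x1.val % 2 = X2.val % 2 then 1 else 0)
        + (if X2.val % 2 = y2.val % 2 then 1 else 0))) then (1:ℂ) else 0) = 0 := by
  classical
  obtain ⟨p, hp1, hp2, hval, hcard⟩ := path_exists w hd hodd hw i x1 X2 B y2 m hm hpar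
  have hfail : (p i).2 ≠ (p (i + 1)).1 := by rw [hp1, hp2]; exact hne
  have heval := sum_eval w hd (fGen w b) (fGen_invalid w b) c i p hval hfail
  rw [hc p] at heval
  -- compute the two fGen values
  have hcongr : ∀ q : ∀ j : Fin d, Edge w j, (∀ j, j ≠ i → j ≠ i + 1 → q j = p j) →
      ((((univ : Finset (Fin d)) \ {i, i + 1}).filter fun j => ParityPres (q j)).card = m) := by
    intro q hqp
    rw [← hcard]
    congr 1
    apply Finset.filter_congr
    intro j hj
    simp only [Finset.mem_sdiff, Finset.mem_univ, true_and, Finset.mem_insert,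
      Finset.mem_singleton] at hj
    push_neg at hj
    rw [hqp j hj.1 hj.2]
  have hq1 : fGen w b (Function.update p i ((p i).1, (p (i + 1)).1)) =
      (if Qb b (m + ((if x1.val % 2 = B.val % 2 then 1 else 0)
        + (if B.val % 2 = y2.val % 2 then 1 else 0))) then (1:ℂ) else 0) := by
    set q1 := Function.update p i ((p i).1, (p (i + 1)).1) with hq1d
    have hval1 : ValidPath w q1 := (valid_update_i w hd p i (p (i + 1)).1).mpr ⟨hval, rfl⟩
    rw [fGen_valid w b q1 hval1]
    refine if_congr ?_ rfl rfl
    rw [Qb, Qb]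
    have hppc : ppCount w q1 = m + ((if x1.val % 2 = B.val % 2 then 1 else 0)
        + (if B.val % 2 = y2.val % 2 then 1 else 0)) := by
      rw [ppCount_split w hd i q1]
      have h1 : (((univ : Finset (Fin d)) \ {i, i + 1}).filter fun j => ParityPres (q1 j)).card = m :=
        hcongr q1 (fun j hj _ => Function.update_of_ne hj _ _)
      rw [h1]
      congr 1
      congr 1
      · refine if_congr ?_ rfl rfl
        rw [show q1 i = ((p i).1, (p (i + 1)).1) from Function.update_self _ _ _]
        show (p i).1.val % 2 = (p (i + 1)).1.val % 2 ↔ _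
        rw [hp1, hp2]
      · refine if_congr ?_ rfl rfl
        rw [show q1 (i + 1) = p (i + 1) from Function.update_of_ne (fin_add_one_ne hd i) _ _]
        show (p (i + 1)).1.val % 2 = (p (i + 1)).2.val % 2 ↔ _
        rw [hp2]
    rw [hppc]
  have hq2 : fGen w b (Function.update p (i + 1) ((p i).2, (p (i + 1)).2)) =
      (if Qb b (m + ((if x1.val % 2 = X2.val % 2 then 1 else 0)
        + (if X2.val % 2 = y2.val % 2 then 1 else 0))) then (1:ℂ) else 0) := by
    set q2 := Function.update p (i + 1) ((p i).2, (p (i + 1)).2) with hq2d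
    have hval2 : ValidPath w q2 := (valid_update_i1 w hd p i (p i).2).mpr ⟨hval, rfl⟩
    rw [fGen_valid w b q2 hval2]
    refine if_congr ?_ rfl rfl
    rw [Qb, Qb]
    have hppc : ppCount w q2 = m + ((if x1.val % 2 = X2.val % 2 then 1 else 0)
        + (if X2.val % 2 = y2.val % 2 then 1 else 0)) := by
      rw [ppCount_split w hd i q2]
      have h1 : (((univ : Finset (Fin d)) \ {i, i + 1}).filter fun j => ParityPres (q2 j)).card = m :=
        hcongr q2 (fun j _ hj => Function.update_of_ne hj _ _)
      rw [h1]
      congr 1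
      congr 1
      · refine if_congr ?_ rfl rfl
        rw [show q2 i = p i from
          Function.update_of_ne (fun hcc => fin_add_one_ne hd i hcc.symm) _ _]
        show (p i).1.val % 2 = (p i).2.val % 2 ↔ _
        rw [hp1]
      · refine if_congr ?_ rfl rfl
        rw [show q2 (i + 1) = ((p i).2, (p (i + 1)).2) from Function.update_self _ _ _]
        show (p i).2.val % 2 = (p (i + 1)).2.val % 2 ↔ _
        rw [hp1, hp2]
    rw [hppc]
  have hx1 : x1 = (p i).1 := by rw [hp1]
  have hX2 : X2 = (p i).2 := by rw [hp1]
  have hB : B = (p (i + 1)).1 := by rw [hp2]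
  have hy2 : y2 = (p (i + 1)).2 := by rw [hp2]
  subst hx1
  subst hX2
  subst hB
  subst hy2
  rw [hq1, hq2] at heval
  exact heval.symm
end G1X

namespace G1X
open ABP Finset

variable {d : ℕ} [NeZero d] (w : Fin d → ℕ)

theorem inj_F {i : Fin d} {X2 B X2' B' : Fin (w (i + 1))} {h : X2 ≠ B} {h' : X2' ≠ B'}
    {x1 x1' : Fin (w i)}
    (he : idxF w i X2 B h x1 = idxF w i X2' B' h' x1') : X2 = X2' ∧ B = B' ∧ x1 = x1' := by
  rw [idxF, idxF] at he
  have h2 := eq_of_heq (Sigma.ext_iff.mp he).2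
  replace h2 := congrArg Subtype.val h2
  simp only [Subtype.mk.injEq, Prod.mk.injEq] at h2
  tauto

theorem inj_S {i : Fin d} {X2 B X2' B' : Fin (w (i + 1))} {h : X2 ≠ B} {h' : X2' ≠ B'}
    {y2 y2' : Fin (w (i + 1 + 1))}
    (he : idxS w i X2 B h y2 = idxS w i X2' B' h' y2') : X2 = X2' ∧ B = B' ∧ y2 = y2' := by
  rw [idxS, idxS] at he
  have h2 := eq_of_heq (Sigma.ext_iff.mp he).2
  replace h2 := congrArg Subtype.val h2
  simp only [Subtype.mk.injEq, Prod.mk.injEq] at h2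
  tauto

theorem ne_FS {iS iF : Fin d} {XS BS : Fin (w (iS + 1))} {hS : XS ≠ BS}
    {yS : Fin (w (iS + 1 + 1))} {XF BF : Fin (w (iF + 1))} {hF : XF ≠ BF} {xF : Fin (w iF)} :
    idxS w iS XS BS hS yS ≠ idxF w iF XF BF hF xF := by
  intro he
  have hfst : iS + 1 = iF := congrArg Sigma.fst he
  subst hfst
  rw [idxS, idxF] at he
  have h2 := eq_of_heq (Sigma.ext_iff.mp he).2
  replace h2 := congrArg Subtype.val h2
  simp only [Subtype.mk.injEq, Prod.mk.injEq] at h2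
  exact hS (h2.1.1.trans h2.2.1.symm)

theorem relElt_at_F_ne (b : Bool) (i i' : Fin d) (hne : i' ≠ i)
    (X2 B : Fin (w (i + 1))) (h : X2 ≠ B)
    (X2' B' : Fin (w (i' + 1))) (h' : X2' ≠ B') (x1 : Fin (w i)) :
    relElt w b i' X2' B' h' (idxF w i X2 B h x1) = 0 := by
  classical
  rw [relElt]
  simp only [Pi.sub_apply, Finset.sum_apply, Pi.smul_apply, smul_eq_mul]
  rw [Finset.sum_eq_zero, Finset.sum_eq_zero, sub_zero]
  · intro y2 _
    rw [Pi.single_apply, if_neg (fun hcc => ne_FS w hcc.symm), mul_zero]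
  · intro x1' _
    rw [Pi.single_apply, if_neg
      (fun hcc : idxF w i X2 B h x1 = idxF w i' X2' B' h' x1' =>
        hne ((congrArg Sigma.fst hcc).symm : i' = i)), mul_zero]

theorem relElt_at_F_eq (b : Bool) (i : Fin d)
    (X2 B : Fin (w (i + 1))) (h : X2 ≠ B)
    (X2' B' : Fin (w (i + 1))) (h' : X2' ≠ B') (x1 : Fin (w i)) :
    relElt w b i X2' B' h' (idxF w i X2 B h x1) =
      if X2' = X2 ∧ B' = B then Ufac b X2.val B.val x1.val else 0 := by
  classical
  rw [relElt]
  simp only [Pi.sub_apply, Finset.sum_apply, Pi.smul_apply, smul_eq_mul]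
  have hS0 : (∑ y2 : Fin (w (i + 1 + 1)), Vfac b X2'.val B'.val y2.val
      * (Pi.single (idxS w i X2' B' h' y2) (1:ℂ) : OneShare w → ℂ) (idxF w i X2 B h x1)) = 0 := by
    apply Finset.sum_eq_zero
    intro y2 _
    rw [Pi.single_apply, if_neg (fun hcc => ne_FS w hcc.symm), mul_zero]
  rw [hS0, sub_zero]
  by_cases hXB : X2' = X2 ∧ B' = B
  · obtain ⟨rfl, rfl⟩ := hXB
    rw [if_pos ⟨rfl, rfl⟩]
    rw [Finset.sum_eq_single x1]
    · rw [Pi.single_apply, if_pos rfl, mul_one]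
    · intro x1' _ hx1'
      rw [Pi.single_apply, if_neg (fun hcc => hx1' (inj_F w hcc).2.2.symm), mul_zero]
    · intro hcc; exact absurd (Finset.mem_univ _) hcc
  · rw [if_neg hXB]
    apply Finset.sum_eq_zero
    intro x1' _
    rw [Pi.single_apply, if_neg
      (fun hcc => hXB ⟨(inj_F w hcc).1.symm, (inj_F w hcc).2.1.symm⟩), mul_zero]

theorem relElt_at_S_ne (b : Bool) (i i' : Fin d) (hne : i' ≠ i)
    (X2 B : Fin (w (i + 1))) (h : X2 ≠ B)
    (X2' B' : Fin (w (i' + 1))) (h' : X2' ≠ B') (y2 : Fin (w (i + 1 + 1))) :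
    relElt w b i' X2' B' h' (idxS w i X2 B h y2) = 0 := by
  classical
  rw [relElt]
  simp only [Pi.sub_apply, Finset.sum_apply, Pi.smul_apply, smul_eq_mul]
  rw [Finset.sum_eq_zero, Finset.sum_eq_zero, sub_zero]
  · intro y2' _
    rw [Pi.single_apply, if_neg
      (fun hcc : idxS w i X2 B h y2 = idxS w i' X2' B' h' y2' =>
        hne (add_right_cancel ((congrArg Sigma.fst hcc).symm : i' + 1 = i + 1))), mul_zero]
  · intro x1' _
    rw [Pi.single_apply, if_neg (fun hcc => (ne_FS w) hcc), mul_zero]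

theorem relElt_at_S_eq (b : Bool) (i : Fin d)
    (X2 B : Fin (w (i + 1))) (h : X2 ≠ B)
    (X2' B' : Fin (w (i + 1))) (h' : X2' ≠ B') (y2 : Fin (w (i + 1 + 1))) :
    relElt w b i X2' B' h' (idxS w i X2 B h y2) =
      if X2' = X2 ∧ B' = B then -(Vfac b X2.val B.val y2.val) else 0 := by
  classical
  rw [relElt]
  simp only [Pi.sub_apply, Finset.sum_apply, Pi.smul_apply, smul_eq_mul]
  have hF0 : (∑ x1 : Fin (w i), Ufac b X2'.val B'.val x1.val
      * (Pi.single (idxF w i X2' B' h' x1) (1:ℂ) : OneShare w → ℂ) (idxS w i X2 B h y2)) = 0 := by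
    apply Finset.sum_eq_zero
    intro x1 _
    rw [Pi.single_apply, if_neg (fun hcc => (ne_FS w) hcc), mul_zero]
  rw [hF0, zero_sub]
  by_cases hXB : X2' = X2 ∧ B' = B
  · obtain ⟨rfl, rfl⟩ := hXB
    rw [if_pos ⟨rfl, rfl⟩]
    rw [Finset.sum_eq_single y2]
    · rw [Pi.single_apply, if_pos rfl, mul_one]
    · intro y2' _ hy2'
      rw [Pi.single_apply, if_neg (fun hcc => hy2' (inj_S w hcc).2.2.symm), mul_zero]
    · intro hcc; exact absurd (Finset.mem_univ _) hcc
  · rw [if_neg hXB]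
    rw [Finset.sum_eq_zero, neg_zero]
    intro y2' _
    rw [Pi.single_apply, if_neg
      (fun hcc => hXB ⟨(inj_S w hcc).1.symm, (inj_S w hcc).2.1.symm⟩), mul_zero]

theorem psiF (b : Bool) (t : PIdx w → ℂ) (i : Fin d)
    (X2 B : Fin (w (i + 1))) (h : X2 ≠ B) (x1 : Fin (w i)) :
    Psi w b t (idxF w i X2 B h x1)
      = Ufac b X2.val B.val x1.val * t ⟨i, ⟨(X2, B), h⟩⟩ := by
  classical
  simp only [Psi, LinearMap.coe_mk, AddHom.coe_mk, Finset.sum_apply, Pi.smul_apply,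
    smul_eq_mul]
  rw [Finset.sum_eq_single i]
  · rw [Finset.sum_eq_single (⟨(X2, B), h⟩ : {v : Fin (w (i + 1)) × Fin (w (i + 1)) // v.1 ≠ v.2})]
    · rw [relElt_at_F_eq w b i X2 B h X2 B h x1, if_pos ⟨rfl, rfl⟩, mul_comm]
    · intro s _ hs
      rw [relElt_at_F_eq w b i X2 B h s.val.1 s.val.2 s.prop x1, if_neg, mul_zero]
      intro hcc
      apply hs
      obtain ⟨h1, h2⟩ := hcc
      apply Subtype.ext
      rw [Prod.ext_iff]
      exact ⟨h1, h2⟩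
    · intro hcc; exact absurd (Finset.mem_univ _) hcc
  · intro i' _ hi'
    apply Finset.sum_eq_zero
    intro s _
    rw [relElt_at_F_ne w b i i' hi' X2 B h s.val.1 s.val.2 s.prop x1, mul_zero]
  · intro hcc; exact absurd (Finset.mem_univ _) hcc

theorem psiS (b : Bool) (t : PIdx w → ℂ) (i : Fin d)
    (X2 B : Fin (w (i + 1))) (h : X2 ≠ B) (y2 : Fin (w (i + 1 + 1))) :
    Psi w b t (idxS w i X2 B h y2)
      = -(Vfac b X2.val B.val y2.val * t ⟨i, ⟨(X2, B), h⟩⟩) := by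
  classical
  simp only [Psi, LinearMap.coe_mk, AddHom.coe_mk, Finset.sum_apply, Pi.smul_apply,
    smul_eq_mul]
  rw [Finset.sum_eq_single i]
  · rw [Finset.sum_eq_single (⟨(X2, B), h⟩ : {v : Fin (w (i + 1)) × Fin (w (i + 1)) // v.1 ≠ v.2})]
    · rw [relElt_at_S_eq w b i X2 B h X2 B h y2, if_pos ⟨rfl, rfl⟩]
      ring
    · intro s _ hs
      rw [relElt_at_S_eq w b i X2 B h s.val.1 s.val.2 s.prop y2, if_neg, mul_zero]
      intro hcc
      apply hs
      obtain ⟨h1, h2⟩ := hcc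
      apply Subtype.ext
      rw [Prod.ext_iff]
      exact ⟨h1, h2⟩
    · intro hcc; exact absurd (Finset.mem_univ _) hcc
  · intro i' _ hi'
    apply Finset.sum_eq_zero
    intro s _
    rw [relElt_at_S_ne w b i i' hi' X2 B h s.val.1 s.val.2 s.prop y2, mul_zero]
  · intro hcc; exact absurd (Finset.mem_univ _) hcc

end G1X

namespace G1X
open ABP Finset

variable {d : ℕ} [NeZero d] (w : Fin d → ℕ)

theorem QbIf_one (b : Bool) {n : ℕ} (hn : n = 1) : (if Qb b n then (1:ℂ) else 0) = 1 :=
  if_pos (by rw [hn, Qb]; intro; rfl)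

theorem QbIf_false {n : ℕ} (hn : n ≠ 1) : (if Qb true n then (1:ℂ) else 0) = 0 :=
  if_neg (fun hq => hn (hq rfl))

theorem QbIf_falseb {n : ℕ} : (if Qb false n then (1:ℂ) else 0) = 1 :=
  if_pos (fun hcc => absurd hcc (by simp))

noncomputable def tDef (hw : ∀ i, 2 ≤ w i) (c : OneShare w → ℂ) : PIdx w → ℂ :=
  fun q => -c (idxS w q.1 q.2.val.1 q.2.val.2 q.2.prop
    (parityVertex w hw (q.1 + 1 + 1) (q.2.val.2.val + 1)))

theorem ker_F (hd : 3 ≤ d) (hodd : Odd d) (hw : ∀ i, 2 ≤ w i) (b : Bool)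
    (c : OneShare w → ℂ) (hc : ∀ p, Phi w (fGen w b) c p = 0)
    (j : Fin d) (a1 : Fin (w j)) (a2 a2' : Fin (w (j + 1))) (hne2 : a2' ≠ a2) :
    Ufac b a2'.val a2.val a1.val * tDef w hw c ⟨j, ⟨(a2', a2), hne2⟩⟩
      = c (idxF w j a2' a2 hne2 a1) := by
  classical
  have htd : tDef w hw c ⟨j, ⟨(a2', a2), hne2⟩⟩
      = -c (idxS w j a2' a2 hne2 (parityVertex w hw (j + 1 + 1) (a2.val + 1))) := rfl
  set Y2 := parityVertex w hw (j + 1 + 1) (a2.val + 1) with hY2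
  have hY2v : Y2.val = (a2.val + 1) % 2 := rfl
  rw [htd]
  by_cases hac : a1.val % 2 = a2.val % 2
  · have hrel := rel_eq w hd hodd hw b c hc j a2' a2 hne2 a1 Y2 0 (by omega)
      (by rw [hY2v]; omega)
    have eA : (0:ℕ) + ((if a1.val % 2 = a2.val % 2 then 1 else 0)
        + (if a2.val % 2 = Y2.val % 2 then 1 else 0)) = 1 := by
      split_ifs <;> omega
    have eB : (0:ℕ) + ((if a1.val % 2 = a2'.val % 2 then 1 else 0)
        + (if a2'.val % 2 = Y2.val % 2 then 1 else 0)) = 1 := by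
      split_ifs <;> omega
    rw [eA, eB, QbIf_one b rfl] at hrel
    have eU : Ufac b a2'.val a2.val a1.val = 1 := by
      rw [Ufac, if_neg]; rintro ⟨-, -, hcc⟩; exact hcc hac
    rw [eU]
    linear_combination -hrel
  · have hrel := rel_eq w hd hodd hw b c hc j a2' a2 hne2 a1 Y2 1 (by omega)
      (by rw [hY2v]; omega)
    have eA : (1:ℕ) + ((if a1.val % 2 = a2.val % 2 then 1 else 0)
        + (if a2.val % 2 = Y2.val % 2 then 1 else 0)) = 1 := by
      split_ifs <;> omega
    rw [eA, QbIf_one b rfl] at hrel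
    by_cases hpc : a2'.val % 2 = a2.val % 2
    · have eB : (1:ℕ) + ((if a1.val % 2 = a2'.val % 2 then 1 else 0)
          + (if a2'.val % 2 = Y2.val % 2 then 1 else 0)) = 1 := by
        split_ifs <;> omega
      rw [eB, QbIf_one b rfl] at hrel
      have eU : Ufac b a2'.val a2.val a1.val = 1 := by
        rw [Ufac, if_neg]; rintro ⟨-, hcc, -⟩; exact hcc hpc
      rw [eU]
      linear_combination -hrel
    · have eB : (1:ℕ) + ((if a1.val % 2 = a2'.val % 2 then 1 else 0)
          + (if a2'.val % 2 = Y2.val % 2 then 1 else 0)) = 3 := by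
        split_ifs <;> omega
      rw [eB] at hrel
      cases b with
      | true =>
        rw [QbIf_false (by omega)] at hrel
        have eU : Ufac true a2'.val a2.val a1.val = 0 := by
          rw [Ufac, if_pos ⟨rfl, hpc, hac⟩]
        rw [eU]
        linear_combination -hrel
      | false =>
        rw [QbIf_falseb] at hrel
        have eU : Ufac false a2'.val a2.val a1.val = 1 := by
          rw [Ufac, if_neg]; rintro ⟨hcc, -, -⟩; exact absurd hcc (by simp)
        rw [eU]
        linear_combination -hrel

theorem ker_S (hd : 3 ≤ d) (hodd : Odd d) (hw : ∀ i, 2 ≤ w i) (b : Bool)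
    (c : OneShare w → ℂ) (hc : ∀ p, Phi w (fGen w b) c p = 0)
    (i : Fin d) (a1 a1' : Fin (w (i + 1))) (h1 : a1 ≠ a1') (a2 : Fin (w (i + 1 + 1))) :
    -(Vfac b a1.val a1'.val a2.val * tDef w hw c ⟨i, ⟨(a1, a1'), h1⟩⟩)
      = c (idxS w i a1 a1' h1 a2) := by
  classical
  have htd : tDef w hw c ⟨i, ⟨(a1, a1'), h1⟩⟩
      = -c (idxS w i a1 a1' h1 (parityVertex w hw (i + 1 + 1) (a1'.val + 1))) := rfl
  set Y2 := parityVertex w hw (i + 1 + 1) (a1'.val + 1) with hY2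
  have hY2v : Y2.val = (a1'.val + 1) % 2 := rfl
  rw [htd]
  by_cases hpc : a1.val % 2 = a1'.val % 2
  · -- X2 ≡ B : V = 1, need c_S(a2) = c_S(Y2)
    set x1 := parityVertex w hw i (a1'.val + 1) with hx1
    have hx1v : x1.val = (a1'.val + 1) % 2 := rfl
    have hrel1 := rel_eq w hd hodd hw b c hc i a1 a1' h1 x1 a2
      (if a1'.val % 2 = a2.val % 2 then 0 else 1) (by split <;> omega)
      (by rw [hx1v]; split_ifs <;> omega)
    have hrel2 := rel_eq w hd hodd hw b c hc i a1 a1' h1 x1 Y2 1 (by omega)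
      (by rw [hx1v, hY2v]; omega)
    have eA1 : (if a1'.val % 2 = a2.val % 2 then (0:ℕ) else 1)
        + ((if x1.val % 2 = a1'.val % 2 then 1 else 0)
          + (if a1'.val % 2 = a2.val % 2 then 1 else 0)) = 1 := by
      split_ifs <;> omega
    have eB1 : (if a1'.val % 2 = a2.val % 2 then (0:ℕ) else 1)
        + ((if x1.val % 2 = a1.val % 2 then 1 else 0)
          + (if a1.val % 2 = a2.val % 2 then 1 else 0)) = 1 := by
      split_ifs <;> omega
    have eA2 : (1:ℕ) + ((if x1.val % 2 = a1'.val % 2 then 1 else 0)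
        + (if a1'.val % 2 = Y2.val % 2 then 1 else 0)) = 1 := by
      split_ifs <;> omega
    have eB2 : (1:ℕ) + ((if x1.val % 2 = a1.val % 2 then 1 else 0)
        + (if a1.val % 2 = Y2.val % 2 then 1 else 0)) = 1 := by
      split_ifs <;> omega
    rw [eA1, eB1, QbIf_one b rfl] at hrel1
    rw [eA2, eB2, QbIf_one b rfl] at hrel2
    have eV : Vfac b a1.val a1'.val a2.val = 1 := by
      rw [Vfac, if_neg]; rintro ⟨-, hcc, -⟩; exact hcc hpc
    rw [eV]
    linear_combination hrel2 - hrel1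
  · by_cases hgc : a2.val % 2 = a1'.val % 2
    · -- V = 0 case when b = true
      set x1 := parityVertex w hw i a1'.val with hx1
      have hx1v : x1.val = a1'.val % 2 := rfl
      have hrel := rel_eq w hd hodd hw b c hc i a1 a1' h1 x1 a2 1 (by omega)
        (by rw [hx1v]; omega)
      have eA : (1:ℕ) + ((if x1.val % 2 = a1'.val % 2 then 1 else 0)
          + (if a1'.val % 2 = a2.val % 2 then 1 else 0)) = 3 := by
        split_ifs <;> omega
      have eB : (1:ℕ) + ((if x1.val % 2 = a1.val % 2 then 1 else 0)
          + (if a1.val % 2 = a2.val % 2 then 1 else 0)) = 1 := by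
        split_ifs <;> omega
      rw [eA, eB, QbIf_one b rfl] at hrel
      cases b with
      | true =>
        rw [QbIf_false (by omega)] at hrel
        have eV : Vfac true a1.val a1'.val a2.val = 0 := by
          rw [Vfac, if_pos ⟨rfl, hpc, hgc⟩]
        rw [eV]
        linear_combination -hrel
      | false =>
        rw [QbIf_falseb] at hrel
        -- also need rel2 with Y2
        have hrel2 := rel_eq w hd hodd hw false c hc i a1 a1' h1 x1 Y2 0 (by omega)
          (by rw [hx1v, hY2v]; omega)
        rw [QbIf_falseb, QbIf_falseb] at hrel2
        have eV : Vfac false a1.val a1'.val a2.val = 1 := by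
          rw [Vfac, if_neg]; rintro ⟨hcc, -, -⟩; exact absurd hcc (by simp)
        rw [eV]
        linear_combination hrel2 - hrel
    · -- a1 ≢ a1', a2 ≢ a1' : V = 1
      set x1 := parityVertex w hw i a1'.val with hx1
      have hx1v : x1.val = a1'.val % 2 := rfl
      have hrel1 := rel_eq w hd hodd hw b c hc i a1 a1' h1 x1 a2 0 (by omega)
        (by rw [hx1v]; omega)
      have hrel2 := rel_eq w hd hodd hw b c hc i a1 a1' h1 x1 Y2 0 (by omega)
        (by rw [hx1v, hY2v]; omega)
      have eA1 : (0:ℕ) + ((if x1.val % 2 = a1'.val % 2 then 1 else 0)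
          + (if a1'.val % 2 = a2.val % 2 then 1 else 0)) = 1 := by
        split_ifs <;> omega
      have eB1 : (0:ℕ) + ((if x1.val % 2 = a1.val % 2 then 1 else 0)
          + (if a1.val % 2 = a2.val % 2 then 1 else 0)) = 1 := by
        split_ifs <;> omega
      have eA2 : (0:ℕ) + ((if x1.val % 2 = a1'.val % 2 then 1 else 0)
          + (if a1'.val % 2 = Y2.val % 2 then 1 else 0)) = 1 := by
        split_ifs <;> omega
      have eB2 : (0:ℕ) + ((if x1.val % 2 = a1.val % 2 then 1 else 0)
          + (if a1.val % 2 = Y2.val % 2 then 1 else 0)) = 1 := by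
        split_ifs <;> omega
      rw [eA1, eB1, QbIf_one b rfl] at hrel1
      rw [eA2, eB2, QbIf_one b rfl] at hrel2
      have eV : Vfac b a1.val a1'.val a2.val = 1 := by
        rw [Vfac, if_neg]; rintro ⟨-, -, hcc⟩; exact hgc hcc
      rw [eV]
      linear_combination hrel2 - hrel1

end G1X

namespace G1X
open ABP Finset

variable {d : ℕ} [NeZero d] (w : Fin d → ℕ)

theorem ker_eq (hd : 3 ≤ d) (hodd : Odd d) (hw : ∀ i, 2 ≤ w i) (b : Bool) :
    LinearMap.ker (Phi w (fGen w b)) = LinearMap.range (Psi w b) := by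
  classical
  apply le_antisymm
  · intro c hcker
    have hc : ∀ p, Phi w (fGen w b) c p = 0 := by
      intro p
      have h0 : Phi w (fGen w b) c = 0 := LinearMap.mem_ker.mp hcker
      rw [h0]
      rfl
    refine ⟨tDef w hw c, ?_⟩
    funext x0
    obtain ⟨j, ⟨⟨⟨g1, g2⟩, ⟨g1', g2'⟩⟩, hxor⟩⟩ := x0
    by_cases hA : g1 = g1'
    · have hnB : ¬ g2 = g2' := by
        rcases hxor with ⟨-, h⟩ | ⟨-, h⟩
        · exact h
        · exact absurd hA h
      subst hA
      have hne : g2' ≠ g2 := fun hcc => hnB hcc.symm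
      show Psi w b (tDef w hw c) (idxF w j g2' g2 hne g1) = c (idxF w j g2' g2 hne g1)
      rw [psiF]
      exact ker_F w hd hodd hw b c hc j g1 g2 g2' hne
    · have hB : g2 = g2' := by
        rcases hxor with ⟨h, -⟩ | ⟨h, -⟩
        · exact absurd h hA
        · exact h
      subst hB
      obtain ⟨i, rfl⟩ : ∃ i : Fin d, j = i + 1 := ⟨j - 1, (fin_sub_add j).symm⟩
      show Psi w b (tDef w hw c) (idxS w i g1 g1' hA g2) = c (idxS w i g1 g1' hA g2)
      rw [psiS]
      exact ker_S w hd hodd hw b c hc i g1 g1' hA g2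
  · rintro c ⟨t, rfl⟩
    rw [LinearMap.mem_ker]
    have hPsi : Psi w b t = ∑ i : Fin d,
        ∑ s : {v : Fin (w (i + 1)) × Fin (w (i + 1)) // v.1 ≠ v.2},
          t ⟨i, s⟩ • relElt w b i s.val.1 s.val.2 s.prop := rfl
    rw [hPsi, map_sum]
    apply Finset.sum_eq_zero
    intro i _
    rw [map_sum]
    apply Finset.sum_eq_zero
    intro s _
    rw [map_smul, phi_relElt w hd b i s.val.1 s.val.2 s.prop, smul_zero]

theorem psi_inj (hw : ∀ i, 2 ≤ w i) (b : Bool) : Function.Injective (Psi w b) := by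
  classical
  rw [← LinearMap.ker_eq_bot]
  apply LinearMap.ker_eq_bot'.mpr
  intro t ht
  funext q
  obtain ⟨i, ⟨⟨x, y⟩, hxy⟩⟩ := q
  show t ⟨i, ⟨(x, y), hxy⟩⟩ = 0
  have h2 : Psi w b t (idxS w i x y hxy (parityVertex w hw (i + 1 + 1) (y.val + 1))) = 0 := by
    rw [ht]
    rfl
  rw [psiS] at h2
  have eV : Vfac b x.val y.val (parityVertex w hw (i + 1 + 1) (y.val + 1)).val = 1 := by
    rw [Vfac, if_neg]
    rintro ⟨-, -, hcc⟩
    have hpv : (parityVertex w hw (i + 1 + 1) (y.val + 1)).val = (y.val + 1) % 2 := rfl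
    rw [hpv] at hcc
    omega
  rw [eV] at h2
  linear_combination -h2

end G1X

namespace G1X
open ABP Finset

variable {d : ℕ} [NeZero d] (w : Fin d → ℕ)

noncomputable def xorEquiv (A B : Type*) :
    {ee : (A × B) × (A × B) // Xor' (ee.1.1 = ee.2.1) (ee.1.2 = ee.2.2)} ≃
      (A × {v : B × B // v.1 ≠ v.2}) ⊕ ({u : A × A // u.1 ≠ u.2} × B) where
  toFun s := if h : s.val.1.1 = s.val.2.1
    then Sum.inl (s.val.1.1, ⟨(s.val.1.2, s.val.2.2), by
      rcases s.prop with ⟨-, hn⟩ | ⟨-, hn⟩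
      · exact hn
      · exact absurd h hn⟩)
    else Sum.inr (⟨(s.val.1.1, s.val.2.1), h⟩, s.val.1.2)
  invFun z := match z with
    | Sum.inl (a, ⟨(b, b'), h⟩) => ⟨((a, b), (a, b')), Or.inl ⟨rfl, h⟩⟩
    | Sum.inr (⟨(a, a'), h⟩, b) => ⟨((a, b), (a', b)), Or.inr ⟨rfl, h⟩⟩
  left_inv := by
    rintro ⟨⟨⟨a, b⟩, ⟨a', b'⟩⟩, hx⟩
    dsimp only
    by_cases h : a = a'
    · subst h
      rw [dif_pos rfl]
    · rw [dif_neg h]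
      have hb : b = b' := by
        rcases hx with ⟨he, -⟩ | ⟨he, -⟩
        · exact absurd he h
        · exact he
      subst hb
      rfl
  right_inv := by
    rintro (⟨a, ⟨⟨b, b'⟩, h⟩⟩ | ⟨⟨⟨a, a'⟩, h⟩, b⟩)
    · dsimp only
      rw [dif_pos rfl]
    · dsimp only
      rw [dif_neg h]

theorem nePairCard (n : ℕ) : Fintype.card {v : Fin n × Fin n // v.1 ≠ v.2} = n * n - n := by
  classical
  have h1 : Fintype.card {v : Fin n × Fin n // v.1 = v.2} = n := by
    have e : {v : Fin n × Fin n // v.1 = v.2} ≃ Fin n :=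
      ⟨fun s => s.val.1, fun a => ⟨(a, a), rfl⟩,
        fun s => Subtype.ext (Prod.ext rfl s.prop), fun a => rfl⟩
    rw [Fintype.card_congr e, Fintype.card_fin]
  have h2 := Fintype.card_subtype_compl (fun v : Fin n × Fin n => v.1 = v.2)
  have h3 : Fintype.card {v : Fin n × Fin n // v.1 ≠ v.2}
      = Fintype.card {v : Fin n × Fin n // ¬ v.1 = v.2} :=
    Fintype.card_congr (Equiv.subtypeEquivRight (fun _ => Iff.rfl))
  rw [h3, h2, h1, Fintype.card_prod, Fintype.card_fin]

theorem cardPIdx : Fintype.card (PIdx w) = ∑ i : Fin d, (w (i + 1) * w (i + 1) - w (i + 1)) := by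
  classical
  rw [Fintype.card_sigma]
  exact Finset.sum_congr rfl (fun i _ => nePairCard _)

theorem cardOneShare :
    Fintype.card (OneShare w)
      = ∑ i : Fin d, (w i * (w (i + 1) * w (i + 1) - w (i + 1))
          + (w i * w i - w i) * w (i + 1)) := by
  classical
  have e0 : Fintype.card (OneShare w) = Fintype.card
      (Σ i : Fin d, {ee : Edge w i × Edge w i // Xor' (ee.1.1 = ee.2.1) (ee.1.2 = ee.2.2)}) :=
    Fintype.card_congr (Equiv.refl _)
  rw [e0, Fintype.card_sigma]
  apply Finset.sum_congr rfl
  intro i _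
  have e1 := Fintype.card_congr (xorEquiv (Fin (w i)) (Fin (w (i + 1))))
  rw [e1, Fintype.card_sum, Fintype.card_prod, Fintype.card_prod, Fintype.card_fin,
    Fintype.card_fin, nePairCard, nePairCard]

theorem natkey (a bb c : ℕ) (ha : 1 ≤ a) :
    (a + bb - 1) * (c - 1) * c + (c * c - c) = a * (c * c - c) + bb * (c * c - c) := by
  have e1 : (c - 1) * c = c * c - c := by rw [Nat.sub_mul, one_mul]
  calc (a + bb - 1) * (c - 1) * c + (c * c - c)
      = (a + bb - 1) * ((c - 1) * c) + (c * c - c) := by rw [mul_assoc]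
    _ = (a + bb - 1) * (c * c - c) + (c * c - c) := by rw [e1]
    _ = (a + bb - 1 + 1) * (c * c - c) := by rw [add_mul, one_mul]
    _ = (a + bb) * (c * c - c) := by rw [Nat.sub_add_cancel (by omega)]
    _ = a * (c * c - c) + bb * (c * c - c) := by rw [add_mul]

theorem sum_shift (F : Fin d → ℕ) : ∑ i : Fin d, F (i + 1) = ∑ i : Fin d, F i :=
  Fintype.sum_equiv (Equiv.addRight 1) _ _ (fun _ => rfl)

theorem card_arith (hw : ∀ i, 2 ≤ w i) :
    (∑ i : Fin d, (w i * (w (i + 1) * w (i + 1) - w (i + 1))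
        + (w i * w i - w i) * w (i + 1)))
      = (∑ i : Fin d, (w (i - 1) + w (i + 1) - 1) * (w i - 1) * w i)
        + ∑ i : Fin d, (w (i + 1) * w (i + 1) - w (i + 1)) := by
  have hshift : ∑ i : Fin d, (w (i + 1) * w (i + 1) - w (i + 1))
      = ∑ i : Fin d, (w i * w i - w i) :=
    sum_shift (fun i => w i * w i - w i)
  rw [hshift, ← Finset.sum_add_distrib]
  have hterm : ∀ i : Fin d, (w (i - 1) + w (i + 1) - 1) * (w i - 1) * w i + (w i * w i - w i)
      = w (i - 1) * (w i * w i - w i) + w (i + 1) * (w i * w i - w i) :=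
    fun i => natkey (w (i - 1)) (w (i + 1)) (w i) (by have := hw (i - 1); omega)
  rw [Finset.sum_congr rfl (fun i _ => hterm i), Finset.sum_add_distrib, Finset.sum_add_distrib]
  congr 1
  · -- LHS first part: Σ w i * (w(i+1)*w(i+1) - w(i+1)) = Σ w (i-1) * (w i * w i - w i)
    have : ∑ i : Fin d, w (i - 1) * (w i * w i - w i)
        = ∑ i : Fin d, w (i + 1 - 1) * (w (i + 1) * w (i + 1) - w (i + 1)) :=
      (sum_shift (fun i => w (i - 1) * (w i * w i - w i))).symm
    rw [this]
    apply Finset.sum_congr rfl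
    intro i _
    rw [add_sub_cancel_right]
  · apply Finset.sum_congr rfl
    intro i _
    ring

end G1X

/-- Let `f` be `f_com` or `f_0`. The dimension of the span of the
tensors `A^{(i)}_{e,e'} f`, over all layers `i` and pairs of distinct edges `e, e'`
of layer `i` sharing exactly one vertex, equals
`Σᵢ (w (i−1) + w (i+1) − 1) · (w i − 1) · w i` (indices mod `d`). -/
theorem g1_span_dim (d : ℕ) [NeZero d] (hd3 : 3 ≤ d) (hodd : Odd d)
    (w : Fin d → ℕ) (hw : ∀ i, 2 ≤ w i)
    (f : (∀ i : Fin d, ABP.Edge w i) → ℂ) (hf : f = ABP.fcom w ∨ f = ABP.f0 w) :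
    Module.finrank ℂ (Submodule.span ℂ
        (Set.range fun x : ABP.OneShare w => ABP.Aact w x.1 x.2.val.1 x.2.val.2 f)) =
      ∑ i : Fin d, (w (i - 1) + w (i + 1) - 1) * (w i - 1) * w i := by
  classical
  obtain ⟨b, hb⟩ : ∃ b : Bool, f = G1X.fGen w b := by
    rcases hf with h | h
    · exact ⟨false, h.trans (G1X.fcom_eq w)⟩
    · exact ⟨true, h.trans (G1X.f0_eq w)⟩
  subst hb
  rw [G1X.span_eq_range w (G1X.fGen w b)]
  have hrn := LinearMap.finrank_range_add_finrank_ker (G1X.Phi w (G1X.fGen w b))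
  rw [Module.finrank_fintype_fun_eq_card] at hrn
  have hker : Module.finrank ℂ (LinearMap.ker (G1X.Phi w (G1X.fGen w b)))
      = Fintype.card (G1X.PIdx w) := by
    rw [G1X.ker_eq w hd3 hodd hw b, LinearMap.finrank_range_of_inj (G1X.psi_inj w hw b),
      Module.finrank_fintype_fun_eq_card]
  have h1 := G1X.cardOneShare w
  have h2 := G1X.cardPIdx w
  have h3 := G1X.card_arith w hw
  omega
end

section
/- The dimension of the ℂ-linear span of the path tensors {ψ(i,e) : i ∈ Fin d, e ∈ E^i} equals |E| − (Σ_{i ∈ Fin d} w i) + 1, where |E| = Σ_{i ∈ Fin d} w i · w (i+1). -/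
open scoped BigOperators

attribute [local instance] Classical.propDecidable

namespace ABP

/-- The path tensor `ψ(i,e)`: value 1 on valid paths whose `i`-th edge is `e`,
0 elsewhere. -/
noncomputable def psi {d : ℕ} [NeZero d] (w : Fin d → ℕ) (i : Fin d) (e : Edge w i) :
    (∀ i : Fin d, Edge w i) → ℂ :=
  fun p => if ValidPath w p ∧ p i = e then 1 else 0

end ABP

/-!
A coefficient vector `c` on the edges lies in the kernel of `c ↦ ∑ c (i, e) • ψ(i,e)` iff its sum
along every closed walk `v 0 → v 1 → ⋯ → v 0` of vertices vanishes. Comparing two closed walks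
that differ in one vertex shows (for `d ≥ 3`) that such `c` are exactly the potential differences
`c i (a, b) = A i a - A (i + 1) b + A (i + 1) (o (i + 1))`, for fixed base vertices `o`,
normalised by `∑ i, A i (o i) = 0`, with `A` uniquely determined. The kernel therefore has
dimension `∑ i, w i - 1`, and rank–nullity gives the dimension of the span.
-/

open Module

namespace Fin

variable {d : ℕ} [NeZero d]

theorem add_one_ne_self (hd : 2 ≤ d) (i : Fin d) : i + 1 ≠ i := by
  rw [Ne, add_eq_left, Fin.one_eq_zero_iff]
  omega

theorem add_one_add_one_ne_self (hd : 3 ≤ d) (i : Fin d) : i + 1 + 1 ≠ i := by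
  rw [Ne, add_assoc, add_eq_left, Fin.ext_iff, Fin.val_add, Fin.val_one',
    Nat.one_mod_eq_one.mpr (by omega)]
  simp [Nat.mod_eq_of_lt (show 2 < d by omega)]

end Fin

namespace ABP

section CycleSum

variable {d : ℕ} {V : Fin d → Type*} {R : Type*} [CommRing R]

def baseSum (o : ∀ i, V i) : (∀ i, V i → R) →ₗ[R] R where
  toFun A := ∑ i, A i (o i)
  map_add' A B := by simp [Finset.sum_add_distrib]
  map_smul' r A := by simp [Finset.mul_sum]

@[simp]
theorem baseSum_apply (o : ∀ i, V i) (A : ∀ i, V i → R) : baseSum o A = ∑ i, A i (o i) := rfl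

variable [NeZero d] (R)

def cycleSumMap : ((Σ i, V i × V (i + 1)) → R) →ₗ[R] ((∀ i, V i) → R) where
  toFun c v := ∑ i, c ⟨i, (v i, v (i + 1))⟩
  map_add' c c' := by ext v; simp [Finset.sum_add_distrib]
  map_smul' r c := by ext v; simp [Finset.mul_sum]

@[simp]
theorem cycleSumMap_apply (c : (Σ i, V i × V (i + 1)) → R) (v : ∀ i, V i) :
    cycleSumMap R c v = ∑ i, c ⟨i, (v i, v (i + 1))⟩ := rfl

variable {R}

/-- Potential differences `A i a - A (i + 1) b`, shifted by a constant on each layer; the shift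
`A (i + 1) (o (i + 1))` makes the parametrisation injective. -/
def edgePotential (o : ∀ i, V i) : (∀ i, V i → R) →ₗ[R] ((Σ i, V i × V (i + 1)) → R) where
  toFun A x := A x.1 x.2.1 - A (x.1 + 1) x.2.2 + A (x.1 + 1) (o (x.1 + 1))
  map_add' A B := by ext x; simp only [Pi.add_apply]; ring
  map_smul' r A := by ext x; simp only [Pi.smul_apply, smul_eq_mul, RingHom.id_apply]; ring

@[simp]
theorem edgePotential_apply (o : ∀ i, V i) (A : ∀ i, V i → R) (x : Σ i, V i × V (i + 1)) :
    edgePotential o A x = A x.1 x.2.1 - A (x.1 + 1) x.2.2 + A (x.1 + 1) (o (x.1 + 1)) := rfl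

theorem edgePotential_injective (o : ∀ i, V i) :
    Function.Injective (edgePotential (R := R) o) := by
  refine (injective_iff_map_eq_zero _).mpr fun A hA => ?_
  ext i a
  simpa using congr_fun hA ⟨i, (a, o (i + 1))⟩

theorem cycleSumMap_edgePotential (o : ∀ i, V i) (A : ∀ i, V i → R) :
    cycleSumMap R (edgePotential o A) = fun _ => baseSum o A := by
  ext v
  have shift (f : ∀ i, V i) : ∑ i, A (i + 1) (f (i + 1)) = ∑ i, A i (f i) :=
    Fintype.sum_equiv (Equiv.addRight 1) _ _ fun _ => rfl
  simp only [cycleSumMap_apply, edgePotential_apply, baseSum_apply, Finset.sum_add_distrib,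
    Finset.sum_sub_distrib, shift, sub_self, zero_add]

theorem edgePotential_eq_of_cycleSumMap_eq_zero (hd : 3 ≤ d) (o : ∀ i, V i)
    {c : (Σ i, V i × V (i + 1)) → R} (hc : cycleSumMap R c = 0) :
    edgePotential o (fun i a => c ⟨i, (a, o (i + 1))⟩) = c := by
  ext ⟨i, a, b⟩
  have h₁ := i.add_one_ne_self (by omega)
  have h₂ := i.add_one_add_one_ne_self hd
  have h₃ := (i + 1).add_one_ne_self (by omega)
  -- The cycle sums at `v` and `v'` differ only in the terms `j = i` and `j = i + 1`;
  -- that `v (i + 1 + 1) = v' (i + 1 + 1)` is where `3 ≤ d` is needed.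
  set v := Function.update (Function.update o i a) (i + 1) b
  set v' := Function.update o i a
  have hdiff : ∑ j, (c ⟨j, (v j, v (j + 1))⟩ - c ⟨j, (v' j, v' (j + 1))⟩) = 0 := by
    rw [Finset.sum_sub_distrib, ← cycleSumMap_apply, ← cycleSumMap_apply, hc, Pi.zero_apply,
      Pi.zero_apply, sub_zero]
  rw [Fintype.sum_eq_add i (i + 1) h₁.symm] at hdiff
  · simp only [v, v', Function.update_self, Function.update_of_ne, h₁, h₁.symm, h₂, h₃, ne_eq,
      not_false_eq_true] at hdiff
    rw [edgePotential_apply]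
    linear_combination -hdiff
  · rintro j ⟨hji, hji₁⟩
    have : j + 1 ≠ i + 1 := fun h => hji (add_right_cancel h)
    simp [v, v', Function.update_of_ne, hji₁, this]

theorem ker_cycleSumMap (hd : 3 ≤ d) (o : ∀ i, V i) :
    LinearMap.ker (cycleSumMap R (V := V)) = (LinearMap.ker (baseSum o)).map (edgePotential o) := by
  ext c
  refine ⟨fun hc => ⟨_, ?_, edgePotential_eq_of_cycleSumMap_eq_zero hd o hc⟩, ?_⟩
  · simpa using congr_fun hc o
  · rintro ⟨A, hA, rfl⟩
    rw [LinearMap.mem_ker, cycleSumMap_edgePotential, LinearMap.mem_ker.mp hA]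
    rfl

theorem finrank_ker_cycleSumMap_add_one (K : Type*) [Field K] [∀ i, Fintype (V i)]
    (hd : 3 ≤ d) (o : ∀ i, V i) :
    finrank K (LinearMap.ker (cycleSumMap K (V := V))) + 1 = ∑ i, Fintype.card (V i) := by
  have hne : baseSum (R := K) o ≠ 0 := by
    intro h
    simpa using LinearMap.congr_fun h fun i _ => if i = 0 then 1 else 0
  rw [ker_cycleSumMap hd o, ← LinearEquiv.finrank_eq
      (Submodule.equivMapOfInjective _ (edgePotential_injective o) _),
    Module.Dual.finrank_ker_add_one_of_ne_zero hne, Module.finrank_pi_fintype]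
  simp

end CycleSum

theorem linearCombination_psi_apply {d : ℕ} [NeZero d] (w : Fin d → ℕ)
    (c : (Σ i, Edge w i) → ℂ) (p : ∀ i, Edge w i) :
    Fintype.linearCombination ℂ (fun x : Σ i, Edge w i => psi w x.1 x.2) c p =
      if ValidPath w p then ∑ i, c ⟨i, p i⟩ else 0 := by
  rw [Fintype.linearCombination_apply, ← Finset.univ_sigma_univ, Finset.sum_sigma]
  by_cases h : ValidPath w p <;> simp [psi, h]

theorem ker_linearCombination_psi {d : ℕ} [NeZero d] (w : Fin d → ℕ) :
    LinearMap.ker (Fintype.linearCombination ℂ (fun x : Σ i, Edge w i => psi w x.1 x.2)) =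
      LinearMap.ker (cycleSumMap ℂ (V := fun i => Fin (w i))) := by
  ext c
  simp only [LinearMap.mem_ker, funext_iff, linearCombination_psi_apply, cycleSumMap_apply,
    Pi.zero_apply]
  refine ⟨fun h v => by simpa [ValidPath] using h fun i => (v i, v (i + 1)), fun h p => ?_⟩
  split_ifs with hp
  · refine (Fintype.sum_congr _ _ fun i => ?_).trans (h fun i => (p i).1)
    exact congrArg (fun e => c ⟨i, e⟩) (Prod.ext rfl (hp i))
  · rfl

theorem finrank_span_psi_add_sum {d : ℕ} [NeZero d] (hd : 3 ≤ d) (w : Fin d → ℕ)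
    (hw : ∀ i, 0 < w i) :
    finrank ℂ (Submodule.span ℂ (Set.range fun x : Σ i, Edge w i => psi w x.1 x.2)) +
      ∑ i, w i = ∑ i, w i * w (i + 1) + 1 := by
  have hker := finrank_ker_cycleSumMap_add_one ℂ hd fun i => (⟨0, hw i⟩ : Fin (w i))
  rw [← Fintype.range_linearCombination]
  simp only [Fintype.card_fin] at hker
  rw [← hker, ← add_assoc, ← ker_linearCombination_psi, LinearMap.finrank_range_add_finrank_ker]
  simp

end ABP

theorem psi_span_dim_general (d : ℕ) [NeZero d] (hd3 : 3 ≤ d)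
    (w : Fin d → ℕ) (hw : ∀ i, 2 ≤ w i) :
    Module.finrank ℂ (Submodule.span ℂ
        (Set.range fun x : Σ i : Fin d, ABP.Edge w i => ABP.psi w x.1 x.2)) =
      (∑ i : Fin d, w i * w (i + 1)) - (∑ i : Fin d, w i) + 1 := by
  have hw₀ (i : Fin d) : 0 < w i := two_pos.trans_le (hw i)
  have hdim := ABP.finrank_span_psi_add_sum hd3 w hw₀
  have hle : ∑ i, w i ≤ ∑ i, w i * w (i + 1) :=
    Finset.sum_le_sum fun i _ => Nat.le_mul_of_pos_right _ (hw₀ (i + 1))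
  omega

/-- The dimension of the span of the path tensors
`{ψ(i,e)}` equals `|E| − Σᵢ w i + 1`, where `|E| = Σᵢ w i · w (i+1)`. -/
theorem psi_span_dim (d : ℕ) [NeZero d] (hd3 : 3 ≤ d) (hodd : Odd d)
    (w : Fin d → ℕ) (hw : ∀ i, 2 ≤ w i) :
    Module.finrank ℂ (Submodule.span ℂ
        (Set.range fun x : Σ i : Fin d, ABP.Edge w i => ABP.psi w x.1 x.2)) =
      (∑ i : Fin d, w i * w (i + 1)) - (∑ i : Fin d, w i) + 1 :=
  psi_span_dim_general d hd3 w hw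
end

section
/- The dimension of the ℂ-linear span of the parity path tensors {ψ'(i,e) : i ∈ Fin d, e ∈ E^i} is at most |E| − Σ_{i ∈ Fin d} w i, where |E| = Σ_{i ∈ Fin d} w i · w (i+1). -/
open scoped BigOperators

attribute [local instance] Classical.propDecidable

namespace ABP

/-- The parity path tensor `ψ'(i,e)`: value 1 on valid paths containing exactly one
parity-preserving edge and whose `i`-th edge is `e`, 0 elsewhere. -/
noncomputable def psi' {d : ℕ} [NeZero d] (w : Fin d → ℕ) (i : Fin d) (e : Edge w i) :
    (∀ i : Fin d, Edge w i) → ℂ :=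
  fun p => if ValidPath w p ∧ ppCount w p = 1 ∧ p i = e then 1 else 0

end ABP

/-!
The span of the `ψ'(i,e)` is the range of `x ↦ ∑ₑ xₑ ψ'(e)` on edge weights `x`, so it suffices
that its kernel has dimension at least `∑ᵢ w i`. On a valid path `p` with one parity-preserving
edge this map evaluates to the sum of `x` along `p`. Coboundaries `φ a - φ b` of vertex
potentials telescope to zero along every valid path; since the layered graph is connected only
constants have zero coboundary, giving `∑ᵢ w i - 1` dimensions of the kernel. The weight
`[i = 0] - [e parity preserving]` sums to `1 - #{parity-preserving edges}` along a path, so it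
lies in the kernel too, but it is not a coboundary: along the all-zero path it sums to
`1 - d ≠ 0`.
-/

open Fin.NatCast in
lemma Fin.apply_eq_apply_zero_of_apply_add_one {n : ℕ} [NeZero n] {α : Type*} (g : Fin n → α)
    (h : ∀ i, g (i + 1) = g i) (i : Fin n) : g i = g 0 := by
  have hcast : ∀ k : ℕ, g (k : Fin n) = g 0 := by
    intro k
    induction k with
    | zero => simp
    | succ k ih => rw [Nat.cast_succ, h, ih]
  simpa using hcast i.val

namespace ABP

variable {d : ℕ} [NeZero d] (w : Fin d → ℕ)

abbrev Vertex : Type := Σ i : Fin d, Fin (w i)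

noncomputable def pathSum (p : ∀ i, Edge w i) : ((Σ i, Edge w i) → ℂ) →ₗ[ℂ] ℂ :=
  ∑ i, LinearMap.proj ⟨i, p i⟩

noncomputable def coboundary : (Vertex w → ℂ) →ₗ[ℂ] ((Σ i, Edge w i) → ℂ) :=
  LinearMap.pi fun x => LinearMap.proj ⟨x.1, x.2.1⟩ - LinearMap.proj ⟨x.1 + 1, x.2.2⟩

noncomputable def parityRelation : (Σ i, Edge w i) → ℂ :=
  fun x => (if x.1 = 0 then 1 else 0) - (if ParityPres x.2 then 1 else 0)

lemma pathSum_apply (p : ∀ i, Edge w i) (x : (Σ i, Edge w i) → ℂ) :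
    pathSum w p x = ∑ i, x ⟨i, p i⟩ := by
  simp [pathSum]

lemma pathSum_coboundary {p : ∀ i, Edge w i} (hp : ValidPath w p) (φ : Vertex w → ℂ) :
    pathSum w p (coboundary w φ) = 0 := by
  have hshift : ∑ i, φ ⟨i + 1, (p i).2⟩ = ∑ i, φ ⟨i, (p i).1⟩ :=
    Fintype.sum_equiv (Equiv.addRight 1) _ _ fun i => by simp [hp i]
  simp [pathSum_apply, coboundary, Finset.sum_sub_distrib, hshift]

lemma pathSum_parityRelation (p : ∀ i, Edge w i) :
    pathSum w p (parityRelation w) = 1 - ppCount w p := by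
  simp [pathSum_apply, parityRelation, Finset.sum_sub_distrib, ppCount, Finset.sum_boole]

noncomputable def psi'Combination : ((Σ i, Edge w i) → ℂ) →ₗ[ℂ] ((∀ i, Edge w i) → ℂ) :=
  Fintype.linearCombination ℂ fun e => psi' w e.1 e.2

lemma range_psi'Combination :
    LinearMap.range (psi'Combination w) =
      Submodule.span ℂ (Set.range fun e : Σ i, Edge w i => psi' w e.1 e.2) :=
  Fintype.range_linearCombination ℂ _

lemma psi'Combination_apply (x : (Σ i, Edge w i) → ℂ) (p : ∀ i, Edge w i) :
    psi'Combination w x p =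
      if ValidPath w p ∧ ppCount w p = 1 then pathSum w p x else 0 := by
  rw [psi'Combination, Fintype.linearCombination_apply, ← Finset.univ_sigma_univ,
    Finset.sum_sigma]
  split_ifs with hp
  · simp [psi', hp, pathSum_apply]
  · simp [psi', ← and_assoc, hp]

lemma mem_ker_psi'Combination {x : (Σ i, Edge w i) → ℂ}
    (hx : ∀ p, ValidPath w p → ppCount w p = 1 → pathSum w p x = 0) :
    x ∈ LinearMap.ker (psi'Combination w) := by
  rw [LinearMap.mem_ker]
  funext p
  rw [psi'Combination_apply]
  split_ifs with hp
  exacts [hx p hp.1 hp.2, rfl]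

lemma range_coboundary_le_ker_psi'Combination :
    LinearMap.range (coboundary w) ≤ LinearMap.ker (psi'Combination w) := by
  rintro _ ⟨φ, rfl⟩
  exact mem_ker_psi'Combination w fun p hp _ => pathSum_coboundary w hp φ

lemma parityRelation_mem_ker_psi'Combination :
    parityRelation w ∈ LinearMap.ker (psi'Combination w) :=
  mem_ker_psi'Combination w fun p _ hp => by simp [pathSum_parityRelation, hp]

variable {w}

lemma ker_coboundary_le (hw : ∀ i, 0 < w i) :
    LinearMap.ker (coboundary w) ≤ ℂ ∙ (1 : Vertex w → ℂ) := by
  intro φ hφ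
  have hedge : ∀ i (a : Fin (w i)) (b : Fin (w (i + 1))), φ ⟨i, a⟩ = φ ⟨i + 1, b⟩ :=
    fun i a b => sub_eq_zero.mp (congrFun hφ ⟨i, a, b⟩)
  let z : ∀ i, Fin (w i) := fun i => ⟨0, hw i⟩
  have hlayer : ∀ i a, φ ⟨i, a⟩ = φ ⟨i, z i⟩ :=
    fun i a => (hedge i a (z _)).trans (hedge i (z i) (z _)).symm
  have hcycle : ∀ i, φ ⟨i, z i⟩ = φ ⟨0, z 0⟩ :=
    Fin.apply_eq_apply_zero_of_apply_add_one (fun i => φ ⟨i, z i⟩)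
      fun i => (hedge i (z i) (z _)).symm
  refine Submodule.mem_span_singleton.mpr ⟨φ ⟨0, z 0⟩, funext fun ⟨i, a⟩ => ?_⟩
  simp [hlayer i a, hcycle i]

lemma sum_le_finrank_range_coboundary_add_one (hw : ∀ i, 0 < w i) :
    ∑ i, w i ≤ Module.finrank ℂ (LinearMap.range (coboundary w)) + 1 := by
  have hker : Module.finrank ℂ (LinearMap.ker (coboundary w)) ≤ 1 :=
    (Submodule.finrank_mono (ker_coboundary_le hw)).trans <|
      (finrank_span_le_card _).trans (by simp)
  have hrank := (coboundary w).finrank_range_add_finrank_ker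
  have hdim : Module.finrank ℂ (Vertex w → ℂ) = ∑ i, w i := by
    simp [Module.finrank_fintype_fun_eq_card]
  omega

def zeroPath (hw : ∀ i, 0 < w i) : ∀ i, Edge w i := fun i => (⟨0, hw i⟩, ⟨0, hw (i + 1)⟩)

lemma validPath_zeroPath (hw : ∀ i, 0 < w i) : ValidPath w (zeroPath hw) := fun _ => rfl

lemma ppCount_zeroPath (hw : ∀ i, 0 < w i) : ppCount w (zeroPath hw) = d := by
  simp [ppCount, zeroPath, ParityPres]

lemma parityRelation_notMem_range_coboundary (hd : d ≠ 1) (hw : ∀ i, 0 < w i) :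
    parityRelation w ∉ LinearMap.range (coboundary w) := by
  rintro ⟨φ, hφ⟩
  have h := pathSum_coboundary w (validPath_zeroPath hw) φ
  rw [hφ, pathSum_parityRelation, ppCount_zeroPath, sub_eq_zero] at h
  exact hd (by exact_mod_cast h.symm)

lemma sum_le_finrank_ker_psi'Combination (hd : d ≠ 1) (hw : ∀ i, 0 < w i) :
    ∑ i, w i ≤ Module.finrank ℂ (LinearMap.ker (psi'Combination w)) :=
  calc ∑ i, w i
    _ ≤ Module.finrank ℂ (LinearMap.range (coboundary w)) + 1 :=
      sum_le_finrank_range_coboundary_add_one hw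
    _ = Module.finrank ℂ ↥(LinearMap.range (coboundary w) ⊔ (ℂ ∙ parityRelation w)) :=
      (Submodule.finrank_sup_span_singleton (parityRelation_notMem_range_coboundary hd hw)).symm
    _ ≤ Module.finrank ℂ (LinearMap.ker (psi'Combination w)) :=
      Submodule.finrank_mono <| sup_le (range_coboundary_le_ker_psi'Combination w) <|
        (Submodule.span_singleton_le_iff_mem _ _).mpr (parityRelation_mem_ker_psi'Combination w)

end ABP

theorem psi'_span_dim_le_general (d : ℕ) [NeZero d] (hd3 : 3 ≤ d)
    (w : Fin d → ℕ) (hw : ∀ i, 2 ≤ w i) :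
    Module.finrank ℂ (Submodule.span ℂ
        (Set.range fun x : Σ i : Fin d, ABP.Edge w i => ABP.psi' w x.1 x.2)) ≤
      (∑ i : Fin d, w i * w (i + 1)) - (∑ i : Fin d, w i) := by
  have hker := ABP.sum_le_finrank_ker_psi'Combination (w := w) (by omega)
    fun i => zero_lt_two.trans_le (hw i)
  have hrank := (ABP.psi'Combination w).finrank_range_add_finrank_ker
  have hdim : Module.finrank ℂ ((Σ i, ABP.Edge w i) → ℂ) = ∑ i, w i * w (i + 1) := by
    simp [Module.finrank_fintype_fun_eq_card]
  rw [← ABP.range_psi'Combination]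
  omega

/-- The dimension of the span of the parity path tensors
`{ψ'(i,e)}` is at most `|E| − Σᵢ w i`, where `|E| = Σᵢ w i · w (i+1)`. -/
theorem psi'_span_dim_le (d : ℕ) [NeZero d] (hd3 : 3 ≤ d) (hodd : Odd d)
    (w : Fin d → ℕ) (hw : ∀ i, 2 ≤ w i) :
    Module.finrank ℂ (Submodule.span ℂ
        (Set.range fun x : Σ i : Fin d, ABP.Edge w i => ABP.psi' w x.1 x.2)) ≤
      (∑ i : Fin d, w i * w (i + 1)) - (∑ i : Fin d, w i) :=
  psi'_span_dim_le_general d hd3 w hw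
end

section
/- The dimension of the ℂ-linear span of the path tensors {ψ(i,e) : i ∈ Fin d, e ∈ E^i} is at most |E| − (Σ_{i ∈ Fin d} w i) + 1, where |E| = Σ_{i ∈ Fin d} w i · w (i+1). -/
open scoped BigOperators

attribute [local instance] Classical.propDecidable

/-! Write `T i a` for the tensor of valid paths through vertex `a` of layer `i`. Summing the path
tensors over the outgoing, resp. incoming, edges of a vertex gives `T`, and summing `T i a` over
the vertices of a layer gives `f_com`. Hence `T (i + 1) b` with `b ≠ 0` is a sum of path tensors
`ψ(i, (c, b))`, then `T (i + 1) 0 = f_com - ∑_{b ≠ 0} T (i + 1) b`, and finally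
`ψ(i, (a, 0)) = T i a - ∑_{b ≠ 0} ψ(i, (a, b))`. So `f_com` together with the `ψ(i, (a, b))`, `b ≠ 0`,
spans all path tensors, and there are `∑ᵢ wᵢ (wᵢ₊₁ - 1) + 1 = |E| - ∑ᵢ wᵢ + 1` of them. -/

theorem Submodule.mem_of_sum_eq {R M ι : Type*} [Ring R] [AddCommGroup M] [Module R M]
    [Fintype ι] {S : Submodule R M} {f : ι → M} {y : M} (hsum : ∑ i, f i = y) (hy : y ∈ S)
    (i₀ : ι) (hf : ∀ i, i ≠ i₀ → f i ∈ S) : f i₀ ∈ S := by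
  classical
  have hf₀ : f i₀ = y - ∑ i ∈ Finset.univ.erase i₀, f i := by
    rw [Finset.sum_erase_eq_sub (Finset.mem_univ i₀), hsum, sub_sub_cancel]
  rw [hf₀]
  exact S.sub_mem hy (S.sum_mem fun i hi => hf i (Finset.ne_of_mem_erase hi))

theorem Fintype.card_fin_val_ne_zero (n : ℕ) :
    Fintype.card {b : Fin n // b.val ≠ 0} = n - 1 := by
  rcases n with _ | n
  · simp
  · rw [Fintype.card_subtype_compl, Fintype.card_fin]
    simp [Fin.val_eq_zero_iff]

namespace ABP

variable {d : ℕ} [NeZero d] (w : Fin d → ℕ)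

noncomputable def vertexTensor (i : Fin d) (a : Fin (w i)) : (∀ i : Fin d, Edge w i) → ℂ :=
  fun p => if ValidPath w p ∧ (p i).1 = a then 1 else 0

theorem sum_psi_outgoing (i : Fin d) (a : Fin (w i)) :
    ∑ b, psi w i (a, b) = vertexTensor w i a := by
  funext p
  by_cases hp : ValidPath w p
  · simp [Finset.sum_apply, psi, vertexTensor, hp, Prod.ext_iff, ite_and]
  · simp [Finset.sum_apply, psi, vertexTensor, hp]

theorem sum_psi_incoming (i : Fin d) (b : Fin (w (i + 1))) :
    ∑ a, psi w i (a, b) = vertexTensor w (i + 1) b := by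
  funext p
  by_cases hp : ValidPath w p
  · simp [Finset.sum_apply, psi, vertexTensor, hp, Prod.ext_iff, hp i, ite_and]
  · simp [Finset.sum_apply, psi, vertexTensor, hp]

theorem sum_vertexTensor (i : Fin d) : ∑ a, vertexTensor w i a = fcom w := by
  funext p
  by_cases hp : ValidPath w p <;> simp [Finset.sum_apply, vertexTensor, fcom, hp]

noncomputable def reducedPathFamily :
    Option (Σ i : Fin d, Fin (w i) × {b : Fin (w (i + 1)) // b.val ≠ 0}) →
      (∀ i : Fin d, Edge w i) → ℂ
  | none => fcom w
  | some ⟨i, a, b⟩ => psi w i (a, b.1)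

theorem psi_mem_span_reducedPathFamily_of_val_ne_zero (i : Fin d) (a : Fin (w i))
    (b : Fin (w (i + 1))) (hb : b.val ≠ 0) :
    psi w i (a, b) ∈ Submodule.span ℂ (Set.range (reducedPathFamily w)) :=
  Submodule.subset_span ⟨some ⟨i, a, b, hb⟩, rfl⟩

theorem vertexTensor_mem_span_reducedPathFamily (i : Fin d) (a : Fin (w i)) :
    vertexTensor w i a ∈ Submodule.span ℂ (Set.range (reducedPathFamily w)) := by
  obtain ⟨j, rfl⟩ : ∃ j : Fin d, i = j + 1 := ⟨i - 1, (sub_add_cancel i 1).symm⟩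
  have of_val_ne_zero (b : Fin (w (j + 1))) (hb : b.val ≠ 0) :
      vertexTensor w (j + 1) b ∈ Submodule.span ℂ (Set.range (reducedPathFamily w)) := by
    rw [← sum_psi_incoming]
    exact Submodule.sum_mem _ fun c _ => psi_mem_span_reducedPathFamily_of_val_ne_zero w j c b hb
  by_cases ha : a.val = 0
  · refine Submodule.mem_of_sum_eq (sum_vertexTensor w (j + 1)) ?_ a
      fun b hba => of_val_ne_zero b fun hb => hba (Fin.ext (hb.trans ha.symm))
    exact Submodule.subset_span ⟨none, rfl⟩
  · exact of_val_ne_zero a ha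

theorem psi_mem_span_reducedPathFamily (i : Fin d) (e : Edge w i) :
    psi w i e ∈ Submodule.span ℂ (Set.range (reducedPathFamily w)) := by
  obtain ⟨a, b⟩ := e
  by_cases hb : b.val = 0
  · exact Submodule.mem_of_sum_eq (sum_psi_outgoing w i a)
      (vertexTensor_mem_span_reducedPathFamily w i a) b
      fun b' hb' => psi_mem_span_reducedPathFamily_of_val_ne_zero w i a b'
        fun h => hb' (Fin.ext (h.trans hb.symm))
  · exact psi_mem_span_reducedPathFamily_of_val_ne_zero w i a b hb

theorem finrank_span_psi_le :
    Module.finrank ℂ (Submodule.span ℂ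
        (Set.range fun x : Σ i : Fin d, Edge w i => psi w x.1 x.2)) ≤
      ∑ i : Fin d, w i * (w (i + 1) - 1) + 1 :=
  calc _ ≤ Module.finrank ℂ (Submodule.span ℂ (Set.range (reducedPathFamily w))) := by
        refine Submodule.finrank_mono (Submodule.span_le.2 ?_)
        rintro _ ⟨⟨i, e⟩, rfl⟩
        exact psi_mem_span_reducedPathFamily w i e
    _ ≤ Fintype.card (Option (Σ i : Fin d, Fin (w i) × {b : Fin (w (i + 1)) // b.val ≠ 0})) :=
        finrank_range_le_card _
    _ = ∑ i : Fin d, w i * (w (i + 1) - 1) + 1 := by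
        simp only [Fintype.card_option, Fintype.card_sigma, Fintype.card_prod, Fintype.card_fin,
          Fintype.card_fin_val_ne_zero]

end ABP

theorem psi_span_dim_le_general (d : ℕ) [NeZero d]
    (w : Fin d → ℕ) (hw : ∀ i, 2 ≤ w i) :
    Module.finrank ℂ (Submodule.span ℂ
        (Set.range fun x : Σ i : Fin d, ABP.Edge w i => ABP.psi w x.1 x.2)) ≤
      (∑ i : Fin d, w i * w (i + 1)) - (∑ i : Fin d, w i) + 1 := by
  have hsum : ∑ i, w i * (w (i + 1) - 1) + ∑ i, w i = ∑ i, w i * w (i + 1) := by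
    rw [← Finset.sum_add_distrib]
    refine Finset.sum_congr rfl fun i _ => ?_
    rw [Nat.mul_sub_one, Nat.sub_add_cancel (Nat.le_mul_of_pos_right _ (two_pos.trans_le (hw (i + 1))))]
  have hbound := ABP.finrank_span_psi_le w
  omega

/-- The dimension of the span of the path tensors
`{ψ(i,e)}` is at most `|E| − Σᵢ w i + 1`, where `|E| = Σᵢ w i · w (i+1)`. -/
theorem psi_span_dim_le (d : ℕ) [NeZero d] (hd3 : 3 ≤ d) (hodd : Odd d)
    (w : Fin d → ℕ) (hw : ∀ i, 2 ≤ w i) :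
    Module.finrank ℂ (Submodule.span ℂ
        (Set.range fun x : Σ i : Fin d, ABP.Edge w i => ABP.psi w x.1 x.2)) ≤
      (∑ i : Fin d, w i * w (i + 1)) - (∑ i : Fin d, w i) + 1 :=
  psi_span_dim_le_general d w hw
end

section
/- Suppose the width format w : Fin d → ℕ satisfies w j = 1 for some j ∈ Fin d (and w i ≥ 1 for all i). Then the tensor f_0 is not concise: there exists j' ∈ Fin d such that the flattening matrix M_{f_0}^{j'} does not have full row rank w j' · w (j'+1). -/
open scoped BigOperators

attribute [local instance] Classical.propDecidable

namespace ABP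

/-- Insert an edge `e` of layer `j` into a tuple of edges of all other layers,
producing a full edge tuple. -/
def insertAt {d : ℕ} [NeZero d] (w : Fin d → ℕ) (j : Fin d) (e : Edge w j)
    (c : ∀ i : {i : Fin d // i ≠ j}, Edge w i.val) : ∀ i : Fin d, Edge w i :=
  fun i => if h : i = j then cast (congrArg (Edge w) h.symm) e else c ⟨i, h⟩

/-- The `j`-th flattening matrix of a tensor: rows indexed by edges of layer `j`,
columns indexed by tuples of edges of the other layers. -/
def flatten {d : ℕ} [NeZero d] (w : Fin d → ℕ)
    (f : (∀ i : Fin d, Edge w i) → ℂ) (j : Fin d) :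
    Matrix (Edge w j) (∀ i : {i : Fin d // i ≠ j}, Edge w i.val) ℂ :=
  Matrix.of fun e c => f (insertAt w j e c)

/-- A tensor is concise if every flattening matrix has full row rank. -/
def Concise {d : ℕ} [NeZero d] (w : Fin d → ℕ)
    (f : (∀ i : Fin d, Edge w i) → ℂ) : Prop :=
  ∀ j : Fin d, (flatten w f j).rank = w j * w (j + 1)

end ABP

/-!
If `w j = 1`, a valid path whose edge in layer `j + 1` is `(0, 0)` must use the edge `(0, 0)` in
layer `j` as well. Both edges are parity preserving, so `f_0` vanishes on every such path: the row
of the `(j + 1)`-st flattening indexed by `(0, 0)` is zero, and that flattening is rank deficient.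
-/

theorem Matrix.rank_lt_card_height_of_row_eq_zero {K m n : Type*} [Field K] [Fintype m]
    [Fintype n] (A : Matrix m n K) {i : m} (hi : A i = 0) :
    A.rank < Fintype.card m := by
  classical
  let P : Matrix m m K := Matrix.diagonal fun k => if k = i then 0 else 1
  have hPA : P * A = A := by
    ext k l
    by_cases hk : k = i <;> simp [P, hk, hi]
  calc A.rank = (P * A).rank := by rw [hPA]
    _ ≤ P.rank := Matrix.rank_mul_le_left P A
    _ = Fintype.card {k // k ≠ i} := by simp [P, Matrix.rank_diagonal]
    _ < Fintype.card m := Fintype.card_subtype_lt (p := (· ≠ i)) (x := i) (by simp)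

theorem Fin.add_one_ne_self_s19 {d : ℕ} [NeZero d] (hd : 2 ≤ d) (j : Fin d) : j + 1 ≠ j := by
  intro h
  have : (1 : Fin d) = 0 := by simpa using h
  rw [Fin.ext_iff, Fin.val_one', Fin.val_zero, Nat.mod_eq_of_lt (by omega)] at this
  exact one_ne_zero this

namespace ABP

variable {d : ℕ} [NeZero d] {w : Fin d → ℕ}

@[simp]
theorem insertAt_self (j : Fin d) (e : Edge w j) (c : ∀ i : {i : Fin d // i ≠ j}, Edge w i.val) :
    insertAt w j e c j = e := by
  simp [insertAt]

theorem two_le_ppCount {p : ∀ i : Fin d, Edge w i} {i k : Fin d} (hik : i ≠ k)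
    (hi : ParityPres (p i)) (hk : ParityPres (p k)) : 2 ≤ ppCount w p := by
  have hsub : ({i, k} : Finset (Fin d)) ⊆ Finset.univ.filter fun l => ParityPres (p l) := by
    simp [Finset.insert_subset_iff, hi, hk]
  simpa [ppCount, Finset.card_pair hik] using Finset.card_le_card hsub

theorem ValidPath.parityPres_of_width_one {p : ∀ i : Fin d, Edge w i} (hp : ValidPath w p)
    {j : Fin d} (hj : w j = 1) (h : ((p (j + 1)).1 : ℕ) = 0) : ParityPres (p j) := by
  have hfst : ((p j).1 : ℕ) = 0 := by have := (p j).1.isLt; omega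
  simp [ParityPres, hfst, hp j, h]

theorem f0_eq_zero_of_width_one (hd : 2 ≤ d) {j : Fin d} (hj : w j = 1)
    {p : ∀ i : Fin d, Edge w i} (h₁ : ((p (j + 1)).1 : ℕ) = 0) (h₂ : ((p (j + 1)).2 : ℕ) = 0) :
    f0 w p = 0 := by
  refine if_neg fun ⟨hp, hcount⟩ => ?_
  have := two_le_ppCount (Fin.add_one_ne_self_s19 hd j)
    (by simp [ParityPres, h₁, h₂]) (hp.parityPres_of_width_one hj h₁)
  omega

theorem flatten_f0_row_eq_zero_of_width_one (hd : 2 ≤ d) {j : Fin d} (hj : w j = 1)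
    {e : Edge w (j + 1)} (h₁ : (e.1 : ℕ) = 0) (h₂ : (e.2 : ℕ) = 0) :
    flatten w (f0 w) (j + 1) e = 0 := by
  ext c
  exact f0_eq_zero_of_width_one hd hj (by simpa using h₁) (by simpa using h₂)

end ABP

theorem f0_not_concise_of_width_one_general (d : ℕ) [NeZero d] (hd3 : 3 ≤ d)
    (w : Fin d → ℕ) (hw : ∀ i, 1 ≤ w i) (hj : ∃ j : Fin d, w j = 1) :
    ∃ j' : Fin d, (ABP.flatten w (ABP.f0 w) j').rank ≠ w j' * w (j' + 1) := by
  obtain ⟨j, hj⟩ := hj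
  refine ⟨j + 1, ne_of_lt ?_⟩
  let e : ABP.Edge w (j + 1) := (⟨0, hw _⟩, ⟨0, hw _⟩)
  have hrow := ABP.flatten_f0_row_eq_zero_of_width_one (by omega) hj (e := e) rfl rfl
  simpa using (ABP.flatten w (ABP.f0 w) (j + 1)).rank_lt_card_height_of_row_eq_zero hrow

/-- For odd `d ≥ 3` and width format `w` with all `w i ≥ 1`,
if `w j = 1` for some `j` then `f_0` is not concise: some flattening fails to
have full row rank. -/
theorem f0_not_concise_of_width_one (d : ℕ) [NeZero d] (hd3 : 3 ≤ d) (hodd : Odd d)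
    (w : Fin d → ℕ) (hw : ∀ i, 1 ≤ w i) (hj : ∃ j : Fin d, w j = 1) :
    ∃ j' : Fin d, (ABP.flatten w (ABP.f0 w) j').rank ≠ w j' * w (j' + 1) :=
  f0_not_concise_of_width_one_general d hd3 w hw hj
end
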